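/- arXiv:2503.22242 — 4 statements merged into one kernel-verified Lean document; each statement's English description precedes it below -/
import Mathlib

section
/- Let (X, T, μ) be a probability measure-preserving dynamical system, f : X → [0,∞] measurable, k(N) = o(N) a trimming sequence and d_N > 0. Suppose that for every ε > 0, μ({x : |S_N^{k(N)}(f)(x)/d_N − 1| > ε}) → 0 as N → ∞, and that in addition μ({f > c·d_N/k(N)}) = o(1/N) for every c > 0. Then the untrimmed weak law holds: for every ε > 0, μ({x : |S_N(f)(x)/d_N − 1| > ε}) → 0 as N → ∞. -/
open Filter MeasureTheory Topology
open scoped ENNReal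

/-- Birkhoff sum `S_N(f)(x)`. -/
noncomputable def birkE {X : Type*} (T : X → X) (f : X → ℝ≥0∞) (N : ℕ) (x : X) : ℝ≥0∞ :=
  ∑ n ∈ Finset.range N, f (T^[n] x)

/-- Trimmed Birkhoff sum `S_N^k(f)(x)`: the Birkhoff sum with the `k` largest
observations removed, realized as the minimum over all `(N-k)`-element subsets of
`{0,...,N-1}` of the corresponding partial sums. -/
noncomputable def trimE {X : Type*} (T : X → X) (f : X → ℝ≥0∞) (k N : ℕ) (x : X) : ℝ≥0∞ :=
  ⨅ A ∈ {A : Finset ℕ | A ⊆ Finset.range N ∧ A.card = N - k}, ∑ n ∈ A, f (T^[n] x)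

theorem stmt2 {X : Type*} [MeasurableSpace X]
    (T : X → X) (μ : Measure X) [IsProbabilityMeasure μ] (hT : MeasurePreserving T μ μ)
    (f : X → ℝ≥0∞) (hf : Measurable f)
    (k : ℕ → ℕ) (hk : Tendsto (fun N => (k N : ℝ) / N) atTop (𝓝 0))
    (d : ℕ → ℝ) (hd : ∀ N, 0 < d N)
    (hweak : ∀ ε > (0:ℝ), Tendsto
      (fun N => μ {x | |(trimE T f (k N) N x).toReal / d N - 1| > ε}) atTop (𝓝 0))
    (htail : ∀ c > (0:ℝ), Tendsto
      (fun (N : ℕ) => (N : ℝ) * (μ {x | f x > ENNReal.ofReal (c * d N / k N)}).toReal)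
      atTop (𝓝 0)) :
    ∀ ε > (0:ℝ), Tendsto
      (fun N => μ {x | |(birkE T f N x).toReal / d N - 1| > ε}) atTop (𝓝 0) := by
  intro ε hε
  have hδ : (0:ℝ) < min ε 1 / 2 := by positivity
  set δ : ℝ := min ε 1 / 2 with hδdef
  have hδε : 2 * δ ≤ ε := by
    have := min_le_left ε 1
    rw [hδdef]; linarith
  have hδ1 : δ ≤ 1 / 2 := by
    have := min_le_right ε 1
    rw [hδdef]; linarith
  set t : ℕ → ℝ≥0∞ := fun N => ENNReal.ofReal (δ * d N / k N) with ht
  set B : ℕ → Set X := fun N => ⋃ n ∈ Finset.range N, T^[n] ⁻¹' {x | f x > t N} with hB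
  have hmeas : ∀ N, MeasurableSet {x | f x > t N} := fun N => hf measurableSet_Ioi
  have hBle : ∀ N, μ (B N) ≤ ENNReal.ofReal ((N : ℝ) * (μ {x | f x > t N}).toReal) := by
    intro N
    have h2 : ∀ n, μ (T^[n] ⁻¹' {x | f x > t N}) = μ {x | f x > t N} := fun n =>
      (hT.iterate n).measure_preimage (hmeas N).nullMeasurableSet
    calc μ (B N) ≤ ∑ n ∈ Finset.range N, μ (T^[n] ⁻¹' {x | f x > t N}) :=
          measure_biUnion_finset_le _ _
      _ = (N : ℝ≥0∞) * μ {x | f x > t N} := by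
          rw [Finset.sum_congr rfl fun n _ => h2 n, Finset.sum_const, Finset.card_range,
            nsmul_eq_mul]
      _ = ENNReal.ofReal ((N : ℝ) * (μ {x | f x > t N}).toReal) := by
          rw [ENNReal.ofReal_mul (Nat.cast_nonneg N), ENNReal.ofReal_natCast,
            ENNReal.ofReal_toReal (measure_ne_top μ _)]
  have hBtend : Tendsto (fun N => μ (B N)) atTop (𝓝 0) := by
    have h0 := htail δ hδ
    have h1 : Tendsto (fun (N : ℕ) => ENNReal.ofReal ((N : ℝ) * (μ {x | f x > t N}).toReal))
        atTop (𝓝 0) := by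
      have := (ENNReal.continuous_ofReal.tendsto 0).comp h0
      rw [ENNReal.ofReal_zero] at this; exact this
    exact tendsto_of_tendsto_of_tendsto_of_le_of_le tendsto_const_nhds h1
      (fun N => zero_le) hBle
  have hsub : ∀ N, {x | |(birkE T f N x).toReal / d N - 1| > ε} ⊆
      {x | |(trimE T f (k N) N x).toReal / d N - 1| > δ} ∪ B N := by
    intro N x hx
    by_contra hcon
    rw [Set.mem_union] at hcon
    push_neg at hcon
    obtain ⟨h1, h2⟩ := hcon
    rw [Set.mem_setOf_eq, not_lt] at h1
    have hgood : ∀ n ∈ Finset.range N, f (T^[n] x) ≤ t N := by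
      intro n hn
      by_contra hlt
      exact h2 (Set.mem_biUnion hn (by simpa using not_le.mp hlt))
    have hd' := hd N
    -- trim ≤ S
    have hts : trimE T f (k N) N x ≤ birkE T f N x := by
      have hsub0 : Finset.range (N - k N) ⊆ Finset.range N :=
        Finset.range_subset_range.mpr (Nat.sub_le _ _)
      refine le_trans (iInf₂_le (Finset.range (N - k N)) ⟨hsub0, by simp⟩) ?_
      exact Finset.sum_le_sum_of_subset hsub0
    -- S ≤ trim + ofReal (δ * d N)
    have hst : birkE T f N x ≤ trimE T f (k N) N x + ENNReal.ofReal (δ * d N) := by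
      have key : ∀ A ∈ {A : Finset ℕ | A ⊆ Finset.range N ∧ A.card = N - k N},
          birkE T f N x ≤ (∑ n ∈ A, f (T^[n] x)) + ENNReal.ofReal (δ * d N) := by
        rintro A ⟨hA1, hA2⟩
        have hsplit : (∑ n ∈ Finset.range N \ A, f (T^[n] x)) + ∑ n ∈ A, f (T^[n] x)
            = birkE T f N x := Finset.sum_sdiff hA1
        have hcard : (Finset.range N \ A).card ≤ k N := by
          rw [Finset.card_sdiff_of_subset hA1, Finset.card_range, hA2]; omega
        have hbd : (∑ n ∈ Finset.range N \ A, f (T^[n] x)) ≤ ENNReal.ofReal (δ * d N) := by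
          calc ∑ n ∈ Finset.range N \ A, f (T^[n] x)
              ≤ (Finset.range N \ A).card • t N :=
                Finset.sum_le_card_nsmul _ _ _ (fun n hn => hgood n (Finset.mem_sdiff.mp hn).1)
            _ = ((Finset.range N \ A).card : ℝ≥0∞) * t N := nsmul_eq_mul _ _
            _ ≤ (k N : ℝ≥0∞) * t N := mul_le_mul_left (by exact_mod_cast hcard) _
            _ ≤ ENNReal.ofReal (δ * d N) := by
                rcases Nat.eq_zero_or_pos (k N) with h0 | h0
                · simp [h0]
                · have hk0 : ((k N : ℝ)) ≠ 0 := Nat.cast_ne_zero.mpr h0.ne'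
                  simp only [ht]
                  rw [← ENNReal.ofReal_natCast (k N), ← ENNReal.ofReal_mul (Nat.cast_nonneg _)]
                  refine ENNReal.ofReal_le_ofReal (le_of_eq ?_)
                  field_simp
        rw [← hsplit]
        exact (add_le_add_left hbd _).trans_eq (add_comm _ _)
      have h3 : birkE T f N x - ENNReal.ofReal (δ * d N) ≤ trimE T f (k N) N x :=
        le_iInf₂ fun A hA => tsub_le_iff_right.mpr (key A hA)
      calc birkE T f N x
          ≤ birkE T f N x - ENNReal.ofReal (δ * d N) + ENNReal.ofReal (δ * d N) := le_tsub_add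
        _ ≤ _ := add_le_add_left h3 _
    -- trim is finite
    have htne : trimE T f (k N) N x ≠ ∞ := by
      intro h
      rw [h] at h1
      simp only [ENNReal.toReal_top, zero_div, zero_sub, abs_neg, abs_one] at h1
      linarith
    have hsne : birkE T f N x ≠ ∞ := by
      intro h
      rw [h] at hst
      exact (ENNReal.add_lt_top.mpr ⟨htne.lt_top, ENNReal.ofReal_lt_top⟩).ne (top_le_iff.mp hst)
    set a := (trimE T f (k N) N x).toReal with ha
    set b := (birkE T f N x).toReal with hb
    have hab1 : a ≤ b := ENNReal.toReal_mono hsne hts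
    have hab2 : b ≤ a + δ * d N := by
      have := ENNReal.toReal_mono
        (by exact ENNReal.add_ne_top.mpr ⟨htne, ENNReal.ofReal_ne_top⟩) hst
      rwa [ENNReal.toReal_add htne ENNReal.ofReal_ne_top,
        ENNReal.toReal_ofReal (by positivity)] at this
    rw [Set.mem_setOf_eq] at hx
    rw [abs_le] at h1
    have hbub : |b / d N - 1| ≤ ε := by
      rw [abs_le]
      have hba : a / d N ≤ b / d N := by gcongr
      have hbu : b / d N ≤ a / d N + δ := by
        rw [div_add' _ _ _ (ne_of_gt hd')]
        gcongr
      constructor <;> [linarith; linarith]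
    exact absurd hx (not_lt.mpr hbub)
  have hle : ∀ N, μ {x | |(birkE T f N x).toReal / d N - 1| > ε} ≤
      μ {x | |(trimE T f (k N) N x).toReal / d N - 1| > δ} + μ (B N) := fun N =>
    (measure_mono (hsub N)).trans (measure_union_le _ _)
  have hsum : Tendsto
      (fun N => μ {x | |(trimE T f (k N) N x).toReal / d N - 1| > δ} + μ (B N))
      atTop (𝓝 0) := by
    have := (hweak δ hδ).add hBtend
    simpa using this
  exact tendsto_of_tendsto_of_tendsto_of_le_of_le tendsto_const_nhds hsum
    (fun N => zero_le) hle
end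

section
/- Let f(x) = 1/x for x ∈ (0,1), f(0) = 0. For every sequence of natural numbers l(N) with l(N) = o(N) there is a dense G_δ set of irrational α ∈ (0,1) such that, for the rotation R_α and any trimming sequence k(N) ≤ l(N) and any normalising sequence d_N > 0, there exists ε > 0 with limsup_{N→∞} λ({x : |S_N^{k(N)}(f)(x)/d_N − 1| > ε}) > 0. -/
open Filter MeasureTheory Topology Set
open scoped ENNReal

/-- The Gauss map `x ↦ {1/x}`. -/
noncomputable def gaussMap (x : ℝ) : ℝ := Int.fract x⁻¹

/-- The `n`-th partial quotient `a_n` (for `n ≥ 1`) of the continued fraction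
expansion of `α`. -/
noncomputable def cfA (α : ℝ) (n : ℕ) : ℕ := ⌊(gaussMap^[n - 1] α)⁻¹⌋₊

/-- The denominators of the continued fraction convergents of `α`:
`q_0 = 0`, `q_1 = 1`, `q_{n+1} = a_n q_n + q_{n-1}`. -/
noncomputable def cfQ (α : ℝ) : ℕ → ℕ
  | 0 => 0
  | 1 => 1
  | n + 2 => cfA α (n + 1) * cfQ α (n + 1) + cfQ α n

/-- The numerators of the continued fraction convergents of `α`:
`p_0 = 1`, `p_1 = 0`, `p_{n+1} = a_n p_n + p_{n-1}`. -/
noncomputable def cfP (α : ℝ) : ℕ → ℤ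
  | 0 => 1
  | 1 => 0
  | n + 2 => cfA α (n + 1) * cfP α (n + 1) + cfP α n

/-- The rotation `R_α : [0,1) → [0,1)`, `x ↦ x + α (mod 1)`. -/
noncomputable def rotMap (α : ℝ) (x : ℝ) : ℝ := Int.fract (x + α)

/-- Birkhoff sum `S_N(f)(x) = ∑_{n=0}^{N-1} f(T^n x)`. -/
noncomputable def birkS {X : Type*} (T : X → X) (f : X → ℝ) (N : ℕ) (x : X) : ℝ :=
  ∑ n ∈ Finset.range N, f (T^[n] x)

/-- Trimmed Birkhoff sum `S_N^k(f)(x)`: the Birkhoff sum with the `k` largest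
observations removed, realized as the minimum over all `(N-k)`-element subsets of
`{0,...,N-1}` of the corresponding partial sums (it is `0` if `k > N`). -/
noncomputable def trimS {X : Type*} (T : X → X) (f : X → ℝ) (k N : ℕ) (x : X) : ℝ :=
  sInf ((fun A : Finset ℕ => ∑ n ∈ A, f (T^[n] x)) ''
    {A : Finset ℕ | A ⊆ Finset.range N ∧ A.card = N - k})

/-- Lebesgue measure on `[0,1)`. -/
noncomputable def lebUnit : Measure ℝ := volume.restrict (Set.Ico 0 1)

/-- `α` is of Roth type: `log q_{n+1} / log q_n → 1`. -/
def RothType (α : ℝ) : Prop :=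
  Tendsto (fun n => Real.log (cfQ α (n + 1)) / Real.log (cfQ α n)) atTop (𝓝 1)

lemma rot_iterate (α x : ℝ) (hx : x ∈ Set.Ico (0:ℝ) 1) (n : ℕ) :
    (rotMap α)^[n] x = Int.fract (x + n * α) := by
  induction n with
  | zero => simp [Int.fract_eq_self.2 ⟨hx.1, hx.2⟩]
  | succ n ih =>
      rw [Function.iterate_succ_apply', ih]
      unfold rotMap
      have h1 : Int.fract (x + ↑n * α) + α = (x + (↑(n+1):ℝ) * α) - ↑⌊x + ↑n * α⌋ := by
        rw [Int.fract]; push_cast; ring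
      rw [h1, Int.fract_sub_intCast]

lemma orbit_mem (α x : ℝ) (hx : x ∈ Set.Ico (0:ℝ) 1) (n : ℕ) :
    (rotMap α)^[n] x ∈ Set.Ico (0:ℝ) 1 := by
  rw [rot_iterate α x hx n]
  exact ⟨Int.fract_nonneg _, Int.fract_lt_one _⟩

lemma trimS_le {X : Type*} (T : X → X) (f : X → ℝ) (k N : ℕ) (x : X)
    (hf : ∀ n, 0 ≤ f (T^[n] x)) :
    trimS T f k N x ≤ ∑ n ∈ Finset.range N, f (T^[n] x) := by
  have hmem : (∑ n ∈ Finset.range (N-k), f (T^[n] x)) ∈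
      ((fun A : Finset ℕ => ∑ n ∈ A, f (T^[n] x)) ''
        {A : Finset ℕ | A ⊆ Finset.range N ∧ A.card = N - k}) :=
    ⟨Finset.range (N-k), ⟨Finset.range_subset_range.2 (Nat.sub_le _ _), Finset.card_range _⟩, rfl⟩
  have hbdd : BddBelow ((fun A : Finset ℕ => ∑ n ∈ A, f (T^[n] x)) ''
      {A : Finset ℕ | A ⊆ Finset.range N ∧ A.card = N - k}) := by
    refine ⟨0, ?_⟩
    rintro y ⟨A, -, rfl⟩
    exact Finset.sum_nonneg fun n _ => hf n
  refine le_trans (csInf_le hbdd hmem) ?_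
  exact Finset.sum_le_sum_of_subset_of_nonneg (Finset.range_subset_range.2 (Nat.sub_le _ _))
    (fun i _ _ => hf i)

lemma le_trimS {X : Type*} (T : X → X) (f : X → ℝ) (k N : ℕ) (x : X) (L : ℝ)
    (h : ∀ A : Finset ℕ, A ⊆ Finset.range N → A.card = N - k →
      L ≤ ∑ n ∈ A, f (T^[n] x)) :
    L ≤ trimS T f k N x := by
  refine le_csInf ⟨_, ⟨Finset.range (N-k), ⟨Finset.range_subset_range.2 (Nat.sub_le _ _),
    Finset.card_range _⟩, rfl⟩⟩ ?_
  rintro y ⟨A, ⟨hA1, hA2⟩, rfl⟩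
  exact h A hA1 hA2

lemma decomp (q : ℕ) (hq0 : 0 < q) (p : ℤ) (i n : ℕ) (β w x : ℝ) (hx : x = (i:ℝ)/q + w) :
    x + n * ((p:ℝ)/q + β)
      = (((((i:ℤ) + n*p)/(q:ℤ)) : ℤ) : ℝ) + (((((i:ℤ) + n*p) % (q:ℤ)) : ℤ) : ℝ)/q + w + n*β := by
  have hid : ((q:ℝ)) * ((((i:ℤ) + n*p)/(q:ℤ) : ℤ):ℝ) + ((((i:ℤ) + n*p) % (q:ℤ) : ℤ):ℝ)
      = (i:ℝ) + n*p := by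
    exact_mod_cast congrArg (Int.cast : ℤ → ℝ) (Int.mul_ediv_add_emod ((i:ℤ) + n*p) q)
  have hq : (q:ℝ) ≠ 0 := by positivity
  subst hx
  field_simp
  nlinarith [hid]

lemma coreA (q M k : ℕ) (p : ℤ) (hq2 : 2 ≤ q) (hM4 : 4 ≤ M) (β : ℝ)
    (hβ0 : 0 < β) (hβ2 : β < 1/(2*M*q^2)) (x : ℝ) (i : ℕ) (hi : i < q)
    (hx : x ∈ Set.Ioo (((i:ℝ)+1/4)/q) (((i:ℝ)+1/2)/q)) :
    trimS (rotMap ((p:ℝ)/q + β)) (fun y => y⁻¹) k (M*q) x ≤ 4*(M*q)*q := by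
  have hq0 : (0:ℝ) < q := by exact_mod_cast (by omega : 0 < q)
  have hM0 : (0:ℝ) < M := by exact_mod_cast (by omega : 0 < M)
  have hiq : (i:ℝ) + 1 ≤ q := by exact_mod_cast hi
  have hx01 : x ∈ Set.Ico (0:ℝ) 1 := by
    constructor
    · refine le_of_lt (lt_trans ?_ hx.1); positivity
    · refine lt_of_lt_of_le hx.2 ?_
      rw [div_le_one hq0]; linarith
  set α := (p:ℝ)/q + β with hα
  set w := x - (i:ℝ)/q with hwdef
  have hxw : x = (i:ℝ)/q + w := by rw [hwdef]; ring
  have hwq : w * q = x * q - i := by rw [hwdef]; field_simp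
  have hw1 : 1/(4*q) < w := by
    have h1 := hx.1
    rw [div_lt_iff₀ hq0] at h1
    rw [div_lt_iff₀ (by positivity : (0:ℝ) < 4*q)]
    nlinarith
  have hw2 : w < 1/(2*q) := by
    have h1 := hx.2
    rw [lt_div_iff₀ hq0] at h1
    rw [lt_div_iff₀ (by positivity : (0:ℝ) < 2*q)]
    nlinarith
  have hval : ∀ n, n < M*q → 1/(4*(q:ℝ)) ≤ (rotMap α)^[n] x := by
    intro n hn
    rw [rot_iterate α x hx01 n, hα, decomp q (by omega) p i n β w x hxw, add_assoc, add_assoc,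
      Int.fract_intCast_add]
    have hnR : (n:ℝ) ≤ M*q := by exact_mod_cast le_of_lt hn
    have hnβ0 : 0 ≤ (n:ℝ)*β := by positivity
    have hnβ : (n:ℝ)*β ≤ 1/(2*q) := by
      calc (n:ℝ)*β ≤ (M*q)*β := by nlinarith
        _ ≤ (M*q)*(1/(2*M*q^2)) := by nlinarith
        _ = 1/(2*q) := by field_simp
    set c := (((i:ℤ) + n*p) % (q:ℤ)) with hc
    have hc0 : (0:ℝ) ≤ (c:ℝ) := by
      exact_mod_cast Int.emod_nonneg _ (by exact_mod_cast (by omega : q ≠ 0))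
    have hcq : (c:ℝ) ≤ (q:ℝ) - 1 := by
      have h2 : c + 1 ≤ (q:ℤ) := Int.emod_lt_of_pos _ (by exact_mod_cast (by omega : 0 < q))
      have h3 : (c:ℝ) + 1 ≤ (q:ℝ) := by exact_mod_cast h2
      linarith
    have hdivq : (0:ℝ) ≤ (c:ℝ)/q := div_nonneg hc0 hq0.le
    have hcq' : (c:ℝ)/q ≤ 1 - 1/q := by
      rw [div_le_iff₀ hq0]
      have : (1 - 1/(q:ℝ))*q = q - 1 := by field_simp
      rw [this]; exact hcq
    have hw0 : (0:ℝ) < w := lt_trans (by positivity) hw1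
    have hz0 : (0:ℝ) ≤ (c:ℝ)/q + (w + n*β) := add_nonneg hdivq (add_nonneg hw0.le hnβ0)
    have hhalf : 1/(2*(q:ℝ)) + 1/(2*(q:ℝ)) = 1/q := by
      rw [← add_div, show (1:ℝ)+1 = 2 by norm_num, div_eq_div_iff (by positivity : (0:ℝ) < 2*q).ne' hq0.ne']
      ring
    have hz1 : (c:ℝ)/q + (w + n*β) < 1 := by linarith [hcq', hw2, hnβ, hhalf]
    rw [Int.fract_eq_self.2 ⟨hz0, hz1⟩]
    have : 1/(4*(q:ℝ)) < w := hw1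
    linarith
  have hnn : ∀ n : ℕ, 0 ≤ (fun y : ℝ => y⁻¹) ((rotMap α)^[n] x) :=
    fun n => inv_nonneg.2 (orbit_mem α x hx01 n).1
  refine le_trans (trimS_le _ _ k (M*q) x hnn) ?_
  have hbound : ∀ n ∈ Finset.range (M*q), (fun y : ℝ => y⁻¹) ((rotMap α)^[n] x) ≤ 4*q := by
    intro n hn
    have h1 := hval n (Finset.mem_range.1 hn)
    have h2 : (0:ℝ) < 1/(4*q) := by positivity
    calc ((rotMap α)^[n] x)⁻¹ ≤ (1/(4*(q:ℝ)))⁻¹ := inv_anti₀ h2 h1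
      _ = 4*q := by rw [one_div, inv_inv]
  refine le_trans (Finset.sum_le_card_nsmul _ _ _ hbound) ?_
  rw [Finset.card_range, nsmul_eq_mul]
  push_cast
  ring_nf
  exact le_of_eq rfl

set_option maxHeartbeats 4000000 in
lemma coreB (q M k : ℕ) (p : ℤ) (hq : Nat.Prime q) (hp : ¬ (q:ℤ) ∣ p)
    (hM4 : 4 ≤ M) (hMk : 2^(64*q+4) * (k+1) ≤ M) (β : ℝ)
    (hβ1 : 1/(4*M*q^2) < β) (hβ2 : β < 1/(2*M*q^2)) (x : ℝ) (i : ℕ) (hi : i < q)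
    (hx : x ∈ Set.Ioo (((i:ℝ)+7/8)/q) (((i:ℝ)+1)/q)) :
    (32:ℝ)*(M*q)*q ≤ trimS (rotMap ((p:ℝ)/q + β)) (fun y => y⁻¹) k (M*q) x := by
  have hq2 : 2 ≤ q := hq.two_le
  have hq0 : (0:ℝ) < q := by exact_mod_cast (by omega : 0 < q)
  have hM0 : (0:ℝ) < M := by exact_mod_cast (by omega : 0 < M)
  have hβ0 : 0 < β := lt_trans (by positivity) hβ1
  have hiq : (i:ℝ) + 1 ≤ q := by exact_mod_cast hi
  have hM4R : (4:ℝ) ≤ M := by exact_mod_cast hM4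
  have hq2R : (2:ℝ) ≤ q := by exact_mod_cast hq2
  have hx01 : x ∈ Set.Ico (0:ℝ) 1 := by
    constructor
    · refine le_of_lt (lt_trans ?_ hx.1); positivity
    · refine lt_of_lt_of_le hx.2 ?_
      rw [div_le_one hq0]; linarith
  set α := (p:ℝ)/q + β with hα
  set w := x - (i:ℝ)/q with hwdef
  have hxw : x = (i:ℝ)/q + w := by rw [hwdef]; ring
  have hwq : w * q = x * q - i := by rw [hwdef]; field_simp
  have hw7 : 7/(8*q) < w := by
    have h1 := hx.1
    rw [div_lt_iff₀ hq0] at h1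
    rw [div_lt_iff₀ (by positivity : (0:ℝ) < 8*q)]
    nlinarith
  have hw1q : w < 1/q := by
    have h1 := hx.2
    rw [lt_div_iff₀ hq0] at h1
    rw [lt_div_iff₀ hq0]
    nlinarith
  set D := 1/(q:ℝ) - w with hDdef
  have hD0 : 0 < D := by rw [hDdef]; linarith
  have hD8 : D < 1/(8*q) := by
    rw [hDdef]
    have : 1/(q:ℝ) - 7/(8*q) = 1/(8*q) := by
      field_simp; ring
    linarith
  set θ := (q:ℝ)*β with hθdef
  have hθ0 : 0 < θ := by positivity
  have hθ1 : 1/(4*((M:ℝ)*q)) < θ := by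
    rw [hθdef]
    have h1 : (q:ℝ) * (1/(4*M*q^2)) = 1/(4*(M*q)) := by field_simp
    nlinarith
  have hθ2 : θ < 1/(2*((M:ℝ)*q)) := by
    rw [hθdef]
    have h1 : (q:ℝ) * (1/(2*M*q^2)) = 1/(2*(M*q)) := by field_simp
    nlinarith
  haveI : Fact (Nat.Prime q) := ⟨hq⟩
  haveI : NeZero q := ⟨by omega⟩
  have pz : (p : ZMod q) ≠ 0 := fun h => hp ((ZMod.intCast_zmod_eq_zero_iff_dvd p q).1 h)
  set n₁ : ℕ := (((-1 : ZMod q) - (i : ZMod q)) * (p : ZMod q)⁻¹).val with hn₁def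
  have hn₁ : n₁ < q := ZMod.val_lt _
  have hdvd : ∀ s : ℕ, (q:ℤ) ∣ ((i:ℤ) + ((n₁:ℤ) + s*q)*p + 1) := by
    intro s
    have h0 : (((i:ℤ) + ((n₁:ℤ) + s*q)*p + 1 : ℤ) : ZMod q) = 0 := by
      push_cast
      rw [show ((n₁:ZMod q)) = ((-1 : ZMod q) - (i : ZMod q)) * (p : ZMod q)⁻¹ from
        ZMod.natCast_rightInverse _]
      rw [ZMod.natCast_self]
      field_simp
      ring
    exact (ZMod.intCast_zmod_eq_zero_iff_dvd _ q).1 h0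
  set s₀ : ℕ := ⌈(D - n₁*β)/θ⌉₊ with hs₀def
  have hs₀ : D - n₁*β ≤ s₀*θ := by
    have h1 : (D - n₁*β)/θ ≤ (s₀:ℝ) := Nat.le_ceil _
    exact (div_le_iff₀ hθ0).1 h1
  have hn₁β : (n₁:ℝ)*β < θ := by
    rw [hθdef]
    have : (n₁:ℝ) < q := by exact_mod_cast hn₁
    nlinarith
  have hfract : ∀ s : ℕ, s₀ ≤ s → s < M →
      Int.fract (x + ((n₁ + s*q : ℕ):ℝ) * α) = (n₁:ℝ)*β + s*θ - D := by
    intro s hs1 hs2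
    obtain ⟨c, hc⟩ := hdvd s
    have hval : x + ((n₁ + s*q : ℕ):ℝ) * α = (c:ℝ) + ((n₁:ℝ)*β + s*θ - D) := by
      rw [hα, hxw, hθdef, hDdef]
      have hcR : (i:ℝ) + ((n₁:ℝ) + s*q)*p + 1 = q*c := by exact_mod_cast congrArg (Int.cast : ℤ → ℝ) hc
      push_cast
      field_simp
      nlinarith [hcR]
    rw [hval, Int.fract_intCast_add]
    apply Int.fract_eq_self.2
    constructor
    · have h1 : (s₀:ℝ)*θ ≤ s*θ := by
        have : (s₀:ℝ) ≤ s := by exact_mod_cast hs1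
        nlinarith
      linarith [hs₀]
    · have hsM : (s:ℝ) ≤ M := by exact_mod_cast le_of_lt hs2
      have h2 : (s:ℝ)*θ ≤ M*θ := by nlinarith
      have h3 : (M:ℝ)*θ < 1/(2*q) := by
        have := hθ2
        have hh : (M:ℝ)*(1/(2*(M*q))) = 1/(2*q) := by field_simp
        nlinarith
      have h4 : 1/(2*(q:ℝ)) ≤ 1/2 := by
        apply div_le_div_of_nonneg_left (by norm_num) (by norm_num)
        · linarith
      have h5 : 1/(2*((M:ℝ)*q)) ≤ 1/2 := by
        apply div_le_div_of_nonneg_left (by norm_num) (by norm_num)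
        nlinarith [hM4R, hq2R]
      linarith [hn₁β, hθ0, hD0, hθ2]
  have hub : ∀ s : ℕ, s₀ ≤ s → (n₁:ℝ)*β + s*θ - D < ((s:ℝ) - s₀ + 1)*θ := by
    intro s hs
    have hsR : (s₀:ℝ) ≤ (s:ℝ) := by exact_mod_cast hs
    rcases Nat.eq_zero_or_pos s₀ with h0 | h0
    · have h0R : (s₀:ℝ) = 0 := by exact_mod_cast h0
      rw [h0R]
      nlinarith [hn₁β, hD0]
    · obtain ⟨m, hm⟩ := Nat.exists_eq_add_of_lt h0
      have hmlt : m < s₀ := by omega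
      have hmR : ((m:ℕ):ℝ) < (D - n₁*β)/θ := by
        rw [hs₀def] at hmlt
        exact Nat.lt_ceil.1 hmlt
      have hmθ : (m:ℝ)*θ < D - n₁*β := by
        rw [lt_div_iff₀ hθ0] at hmR
        exact hmR
      have hms : (m:ℝ) = (s₀:ℝ) - 1 := by
        have : s₀ = m + 1 := by omega
        rw [this]; push_cast; ring
      nlinarith [hmθ, hθ0]
  have hlbv : ∀ s : ℕ, s₀ < s → θ ≤ (n₁:ℝ)*β + s*θ - D := by
    intro s hs
    have hsR : (s₀:ℝ) + 1 ≤ (s:ℝ) := by exact_mod_cast hs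
    nlinarith [hs₀, hθ0]
  have hs₀M : (s₀:ℝ) < (M:ℝ)/2 + 1 := by
    have h1 : s₀ ≤ ⌈D/θ⌉₊ := by
      rw [hs₀def]
      apply Nat.ceil_le_ceil
      apply div_le_div_of_nonneg_right ?_ hθ0.le
      nlinarith [mul_nonneg (Nat.cast_nonneg n₁ : (0:ℝ) ≤ n₁) hβ0.le]
    have h2 : (⌈D/θ⌉₊:ℝ) < D/θ + 1 := Nat.ceil_lt_add_one (by positivity)
    have hid : ((M:ℝ)/2)*(1/(4*((M:ℝ)*q))) = 1/(8*q) := by field_simp; ring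
    have h4 : ((M:ℝ)/2)*(1/(4*((M:ℝ)*q))) < ((M:ℝ)/2)*θ := by nlinarith [hθ1, hM0]
    have h3 : D/θ < (M:ℝ)/2 := by
      rw [div_lt_iff₀ hθ0]
      nlinarith [hD8, hid, h4]
    have h5 : (s₀:ℝ) ≤ (⌈D/θ⌉₊:ℝ) := by exact_mod_cast h1
    linarith
  have hMkR : (2:ℝ)^(64*q+4)*((k:ℝ)+1) ≤ M := by exact_mod_cast hMk
  have hpow8 : (2:ℝ)^(64*q+4) = 8*2^(64*q+1) := by
    rw [show 64*q+4 = (64*q+1)+3 by ring, pow_add]; ring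
  have h8 : (2:ℝ)^(64*q+1)*((k:ℝ)+1) ≤ (M:ℝ)/8 := by nlinarith [hMkR]
  have hcapR : (s₀:ℝ) + (2:ℝ)^(64*q+1)*((k:ℝ)+1) ≤ M := by linarith [hs₀M, h8, hM4R]
  have hcap : s₀ + 2^(64*q+1)*(k+1) ≤ M := by exact_mod_cast hcapR
  have hkM : k + 1 ≤ M := le_trans (Nat.le_mul_of_pos_left _ (pow_pos (by norm_num) _)) hMk
  have hkN : k ≤ M*q := by
    calc k ≤ M := by omega
      _ ≤ M*q := Nat.le_mul_of_pos_right _ (by omega)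
  apply le_trimS
  intro A hA hcard
  classical
  set Bj : ℕ → Finset ℕ :=
    fun j => (Finset.Ico (s₀ + 2^(j+1)*(k+1)) (s₀ + 2^(j+2)*(k+1))).image (fun s => n₁ + s*q)
    with hBj
  have hinj : Function.Injective (fun s : ℕ => n₁ + s*q) := by
    intro a b hab
    simp only at hab
    have h1 : a*q = b*q := by omega
    exact Nat.eq_of_mul_eq_mul_right (by omega) h1
  have hsmem : ∀ j, j < 64*q → ∀ s, s ∈ Finset.Ico (s₀ + 2^(j+1)*(k+1)) (s₀ + 2^(j+2)*(k+1)) →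
      s₀ < s ∧ s < M := by
    intro j hj s hs
    rw [Finset.mem_Ico] at hs
    have hmono : 2^(j+2)*(k+1) ≤ 2^(64*q+1)*(k+1) :=
      Nat.mul_le_mul_right _ (Nat.pow_le_pow_right (by norm_num) (by omega))
    have h1 : 1 ≤ 2^(j+1)*(k+1) := Nat.mul_pos (pow_pos (by norm_num) _) (by omega)
    omega
  have hsub : ∀ j, j < 64*q → Bj j ⊆ Finset.range (M*q) := by
    intro j hj n hn
    rw [hBj] at hn
    obtain ⟨s, hs, rfl⟩ := Finset.mem_image.1 hn
    obtain ⟨-, hsM⟩ := hsmem j hj s hs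
    have h2 : (s+1)*q ≤ M*q := Nat.mul_le_mul_right q (by omega)
    have h3 : (s+1)*q = s*q + q := by ring
    exact Finset.mem_range.2 (by omega)
  have hvallow : ∀ j, j < 64*q → ∀ n ∈ A ∩ Bj j,
      ((2:ℝ)^(j+2)*((k:ℝ)+1)*θ)⁻¹ ≤ ((rotMap α)^[n] x)⁻¹ := by
    intro j hj n hn
    rw [Finset.mem_inter, hBj] at hn
    obtain ⟨s, hs, rfl⟩ := Finset.mem_image.1 hn.2
    obtain ⟨hs₀s, hsM⟩ := hsmem j hj s hs
    rw [Finset.mem_Ico] at hs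
    have hfr := hfract s (by omega) hsM
    rw [rot_iterate α x hx01, hfr]
    have hvpos : θ ≤ (n₁:ℝ)*β + s*θ - D := hlbv s hs₀s
    have hsU : (s:ℝ) + 1 ≤ (s₀:ℝ) + 2^(j+2)*((k:ℝ)+1) := by exact_mod_cast hs.2
    have hvU : (n₁:ℝ)*β + s*θ - D < 2^(j+2)*((k:ℝ)+1)*θ := by
      refine lt_of_lt_of_le (hub s (by omega)) ?_
      have h6 : (s:ℝ) - s₀ + 1 ≤ 2^(j+2)*((k:ℝ)+1) := by linarith
      nlinarith [hθ0]
    exact inv_anti₀ (lt_of_lt_of_le hθ0 hvpos) (le_of_lt hvU)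
  have hdisj : (↑(Finset.range (64*q)) : Set ℕ).PairwiseDisjoint (fun j => A ∩ Bj j) := by
    intro a _ b _ hab
    have key : ∀ u v : ℕ, u < v → Disjoint (A ∩ Bj u) (A ∩ Bj v) := by
      intro u v huv
      rw [Finset.disjoint_left]
      intro n hnu hnv
      rw [Finset.mem_inter, hBj] at hnu hnv
      obtain ⟨s, hs, hn⟩ := Finset.mem_image.1 hnu.2
      obtain ⟨s', hs', hn'⟩ := Finset.mem_image.1 hnv.2
      have hss : s = s' := hinj (hn.trans hn'.symm)
      rw [Finset.mem_Ico] at hs hs'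
      have hmono : 2^(u+2)*(k+1) ≤ 2^(v+1)*(k+1) :=
        Nat.mul_le_mul_right _ (Nat.pow_le_pow_right (by norm_num) (by omega))
      omega
    rcases lt_or_gt_of_ne hab with h | h
    · exact key a b h
    · exact (key b a h).symm
  have hcardlow : ∀ j, j < 64*q → 2^j*(k+1) ≤ (A ∩ Bj j).card := by
    intro j hj
    have hBcard : (Bj j).card = 2^(j+1)*(k+1) := by
      rw [hBj]
      rw [Finset.card_image_of_injective _ hinj, Nat.card_Ico]
      have h2X : 2^(j+2)*(k+1) = 2*(2^(j+1)*(k+1)) := by ring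
      omega
    have hsd : (Bj j \ A).card ≤ k := by
      have h1 : Bj j \ A ⊆ Finset.range (M*q) \ A :=
        Finset.sdiff_subset_sdiff (hsub j hj) (le_refl A)
      have h2 := Finset.card_le_card h1
      rw [Finset.card_sdiff_of_subset hA, Finset.card_range, hcard] at h2
      omega
    have h3 := Finset.card_inter_add_card_sdiff (Bj j) A
    have h4 : 2^(j+1)*(k+1) = 2*(2^j*(k+1)) := by ring
    have h5 : 1 ≤ 2^j*(k+1) := Nat.mul_pos (pow_pos (by norm_num) _) (by omega)
    have h6 : k + 1 ≤ 2^j*(k+1) := Nat.le_mul_of_pos_left _ (pow_pos (by norm_num) _)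
    rw [Finset.inter_comm]
    omega
  have hnninv : ∀ n : ℕ, (0:ℝ) ≤ ((rotMap α)^[n] x)⁻¹ :=
    fun n => inv_nonneg.2 (orbit_mem α x hx01 n).1
  have hperj : ∀ j ∈ Finset.range (64*q), (4*θ)⁻¹ ≤ ∑ n ∈ A ∩ Bj j, ((rotMap α)^[n] x)⁻¹ := by
    intro j hj
    rw [Finset.mem_range] at hj
    have hb0 : (0:ℝ) ≤ ((2:ℝ)^(j+2)*((k:ℝ)+1)*θ)⁻¹ := by positivity
    have h1 : (2^j*(k+1) : ℕ) • ((2:ℝ)^(j+2)*((k:ℝ)+1)*θ)⁻¹ ≤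
        (A ∩ Bj j).card • ((2:ℝ)^(j+2)*((k:ℝ)+1)*θ)⁻¹ :=
      nsmul_le_nsmul_left hb0 (hcardlow j hj)
    have h2 := Finset.card_nsmul_le_sum (A ∩ Bj j) _ _ (hvallow j hj)
    have h3 : ((2^j*(k+1) : ℕ) : ℝ) * ((2:ℝ)^(j+2)*((k:ℝ)+1)*θ)⁻¹ = (4*θ)⁻¹ := by
      push_cast
      rw [show (2:ℝ)^(j+2) = 4*2^j by rw [pow_add]; ring]
      rw [mul_inv, mul_inv]
      have hk1 : ((k:ℝ)+1) ≠ 0 := by positivity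
      have h2j : ((2:ℝ)^j) ≠ 0 := by positivity
      field_simp
    rw [nsmul_eq_mul] at h1
    rw [h3] at h1
    exact le_trans h1 h2
  have hchain : (64*(q:ℝ))*(4*θ)⁻¹ ≤ ∑ n ∈ A, ((rotMap α)^[n] x)⁻¹ := by
    have hsubA : (Finset.range (64*q)).biUnion (fun j => A ∩ Bj j) ⊆ A :=
      Finset.biUnion_subset.2 (fun j _ => Finset.inter_subset_left)
    calc (64*(q:ℝ))*(4*θ)⁻¹ = ∑ _j ∈ Finset.range (64*q), (4*θ)⁻¹ := by
          rw [Finset.sum_const, Finset.card_range, nsmul_eq_mul]; push_cast; ring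
      _ ≤ ∑ j ∈ Finset.range (64*q), ∑ n ∈ A ∩ Bj j, ((rotMap α)^[n] x)⁻¹ :=
          Finset.sum_le_sum hperj
      _ = ∑ n ∈ (Finset.range (64*q)).biUnion (fun j => A ∩ Bj j), ((rotMap α)^[n] x)⁻¹ :=
          (Finset.sum_biUnion hdisj).symm
      _ ≤ ∑ n ∈ A, ((rotMap α)^[n] x)⁻¹ :=
          Finset.sum_le_sum_of_subset_of_nonneg hsubA (fun n _ _ => hnninv n)
  have hfin : (32:ℝ)*(M*q)*q ≤ (64*(q:ℝ))*(4*θ)⁻¹ := by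
    have h4θ : (0:ℝ) < 4*θ := by linarith
    have h1 : 4*θ < 2/((M:ℝ)*q) := by
      have : (2:ℝ)/((M:ℝ)*q) = 4*(1/(2*((M:ℝ)*q))) := by field_simp; ring
      nlinarith [hθ2]
    have h2 : ((2:ℝ)/((M:ℝ)*q))⁻¹ < (4*θ)⁻¹ := by
      apply inv_strictAnti₀ h4θ h1
    have h3 : ((2:ℝ)/((M:ℝ)*q))⁻¹ = (M:ℝ)*q/2 := by
      rw [inv_div]
    have h4 : (64*(q:ℝ))*((M:ℝ)*q/2) = 32*((M:ℝ)*q)*q := by ring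
    nlinarith [h2, hq0, hM0]
  exact le_trans hfin hchain

lemma meas_event (q : ℕ) (hq : 1 ≤ q) (a b : ℝ) (ha : 0 ≤ a) (hab : a < b) (hb : b ≤ 1) :
    ENNReal.ofReal (b - a) ≤
      lebUnit (⋃ i ∈ Finset.range q, Ioo (((i:ℝ)+a)/q) (((i:ℝ)+b)/q)) := by
  have hq0 : (0:ℝ) < q := by exact_mod_cast hq
  set E := ⋃ i ∈ Finset.range q, Ioo (((i:ℝ)+a)/q) (((i:ℝ)+b)/q) with hE
  have hEsub : E ⊆ Set.Ico (0:ℝ) 1 := by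
    intro x hx
    rw [hE, Set.mem_iUnion₂] at hx
    obtain ⟨i, hi, hx⟩ := hx
    rw [Finset.mem_range] at hi
    have hiq : (i:ℝ) + 1 ≤ q := by exact_mod_cast hi
    constructor
    · refine le_of_lt (lt_of_le_of_lt ?_ hx.1); positivity
    · refine lt_of_lt_of_le hx.2 ?_
      rw [div_le_one hq0]; linarith
  have hdisj : (↑(Finset.range q) : Set ℕ).PairwiseDisjoint
      (fun i : ℕ => Ioo (((i:ℝ)+a)/q) (((i:ℝ)+b)/q)) := by
    intro u _ v _ huv
    have key : ∀ u v : ℕ, u < v →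
        Disjoint (Ioo (((u:ℝ)+a)/q) (((u:ℝ)+b)/q)) (Ioo (((v:ℝ)+a)/q) (((v:ℝ)+b)/q)) := by
      intro u v huv
      apply Set.disjoint_left.2
      intro x hxu hxv
      have h1 : x < ((u:ℝ)+b)/q := hxu.2
      have h2 : ((v:ℝ)+a)/q < x := hxv.1
      have h3 : (u:ℝ) + 1 ≤ v := by exact_mod_cast huv
      have h4 : ((u:ℝ)+b)/q ≤ ((v:ℝ)+a)/q := by
        apply div_le_div_of_nonneg_right ?_ hq0.le
        linarith
      linarith
    rcases lt_or_gt_of_ne huv with h | h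
    · exact key u v h
    · exact (key v u h).symm
  have hmeasI : ∀ i ∈ Finset.range q,
      MeasurableSet (Ioo (((i:ℝ)+a)/q) (((i:ℝ)+b)/q)) := fun i _ => measurableSet_Ioo
  have hEq : lebUnit E = ENNReal.ofReal (b - a) := by
    rw [lebUnit, Measure.restrict_apply' measurableSet_Ico, Set.inter_eq_left.2 hEsub, hE]
    rw [measure_biUnion_finset hdisj hmeasI]
    have hvol : ∀ i : ℕ, volume (Ioo (((i:ℝ)+a)/q) (((i:ℝ)+b)/q)) = ENNReal.ofReal ((b-a)/q) := by
      intro i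
      rw [Real.volume_Ioo]
      congr 1
      field_simp
      ring
    calc ∑ i ∈ Finset.range q, volume (Ioo (((i:ℝ)+a)/q) (((i:ℝ)+b)/q))
        = ∑ _x ∈ Finset.range q, ENNReal.ofReal ((b-a)/q) := by
          exact Finset.sum_congr rfl (fun i _ => hvol i)
      _ = (q : ℝ≥0∞) * ENNReal.ofReal ((b-a)/q) := by
          rw [Finset.sum_const, Finset.card_range, nsmul_eq_mul]
      _ = ENNReal.ofReal (q * ((b-a)/q)) := by
          rw [← ENNReal.ofReal_natCast q, ← ENNReal.ofReal_mul (by positivity)]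
      _ = ENNReal.ofReal (b - a) := by
          congr 1
          field_simp
  exact le_of_eq hEq.symm

lemma exists_M (l : ℕ → ℕ) (hl : Tendsto (fun N => (l N : ℝ) / N) atTop (𝓝 0)) (q : ℕ) :
    ∃ M : ℕ, 4 ≤ M ∧ ∀ k, k ≤ l (M*q) → 2^(64*q+4) * (k+1) ≤ M := by
  rcases Nat.eq_zero_or_pos q with hq | hq
  · refine ⟨max 4 (2^(64*q+4) * (l 0 + 1)), le_max_left _ _, fun k hk => ?_⟩
    subst hq
    simp only [Nat.mul_zero] at hk
    calc 2^(64*0+4) * (k+1) ≤ 2^(64*0+4) * (l 0 + 1) := Nat.mul_le_mul_left _ (by omega)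
      _ ≤ max 4 (2^(64*0+4) * (l 0 + 1)) := le_max_right _ _
  · set C : ℕ := 2^(64*q+4) with hC
    have hC1 : 1 ≤ C := Nat.one_le_two_pow
    have hδ : (0:ℝ) < 1/(2*C*q) := by positivity
    have hev := (tendsto_order.1 hl).2 _ hδ
    rw [eventually_atTop] at hev
    obtain ⟨N₀, hN₀⟩ := hev
    refine ⟨max (max N₀ (2*C)) 4, le_max_right _ _, fun k hk => ?_⟩
    set M := max (max N₀ (2*C)) 4 with hM
    have hMN₀ : N₀ ≤ M := le_trans (le_max_left _ _) (le_max_left _ _)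
    have hM2C : 2*C ≤ M := le_trans (le_max_right _ _) (le_max_left _ _)
    have hNM : N₀ ≤ M*q := le_trans hMN₀ (Nat.le_mul_of_pos_right _ hq)
    have h1 := hN₀ (M*q) hNM
    -- (l (M*q) : ℝ)/(M*q) < 1/(2*C*q)
    have hq0 : (0:ℝ) < q := by exact_mod_cast hq
    have hM0 : (0:ℝ) < M := by
      have : 4 ≤ M := le_max_right _ _
      exact_mod_cast (by omega : 0 < M)
    have hC0 : (0:ℝ) < C := by exact_mod_cast hC1
    have h2 : (l (M*q) : ℝ) < (M:ℝ)/(2*C) := by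
      rw [div_lt_iff₀ (by positivity)] at h1
      have hMq : ((M*q : ℕ):ℝ) = (M:ℝ)*q := by push_cast; ring
      rw [hMq] at h1
      have : (M:ℝ)*q*(1/(2*C*q)) = (M:ℝ)/(2*C) := by field_simp
      nlinarith
    have h3 : (C:ℝ) * ((k:ℝ)+1) ≤ M := by
      have hkR : (k:ℝ) ≤ l (M*q) := by exact_mod_cast hk
      have hCM : 2*(C:ℝ) ≤ M := by exact_mod_cast hM2C
      have : (C:ℝ)*((k:ℝ)+1) ≤ (C:ℝ)*((M:ℝ)/(2*C) + 1) := by nlinarith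
      have h4 : (C:ℝ)*((M:ℝ)/(2*C) + 1) = (M:ℝ)/2 + C := by field_simp
      nlinarith
    have : ((C * (k+1) : ℕ) : ℝ) ≤ (M:ℝ) := by push_cast; nlinarith [h3]
    exact_mod_cast this

set_option maxHeartbeats 2000000 in
theorem stmt4 (l : ℕ → ℕ) (hl : Tendsto (fun N => (l N : ℝ) / N) atTop (𝓝 0)) :
    ∃ S : Set ℝ, IsGδ S ∧ S ⊆ {α | α ∈ Set.Ioo (0:ℝ) 1 ∧ Irrational α} ∧
      Set.Ioo (0:ℝ) 1 ⊆ closure S ∧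
      ∀ α ∈ S, ∀ k : ℕ → ℕ, (∀ N, k N ≤ l N) → ∀ d : ℕ → ℝ, (∀ N, 0 < d N) →
        ∃ ε > (0:ℝ), 0 < Filter.limsup
          (fun N => lebUnit
            {x | |trimS (rotMap α) (fun y => y⁻¹) (k N) N x / d N - 1| > ε}) atTop := by
  classical
  choose Mf hMf4 hMfk using exists_M l hl
  set U : ℕ → Set ℝ := fun m => ⋃ (q : ℕ) (_ : Nat.Prime q ∧ m ≤ q) (p : ℤ) (_ : ¬(q:ℤ) ∣ p),
      Ioo ((p:ℝ)/q + 1/(4*(Mf q : ℝ)*(q:ℝ)^2)) ((p:ℝ)/q + 1/(2*(Mf q : ℝ)*(q:ℝ)^2)) with hU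
  have hUopen : ∀ m, IsOpen (U m) := fun m =>
    isOpen_iUnion fun q => isOpen_iUnion fun _ => isOpen_iUnion fun p =>
      isOpen_iUnion fun _ => isOpen_Ioo
  have hUdense : ∀ m, Dense (U m) := by
    intro m
    rw [dense_iff_exists_between]
    intro s t hst
    have hts : (0:ℝ) < t - s := by linarith
    obtain ⟨q, hqle, hqp⟩ := Nat.exists_infinite_primes (max (m+1) (⌈4/(t-s)⌉₊ + 1))
    have hq2 : 2 ≤ q := hqp.two_le
    have hqm : m ≤ q := by
      have := le_trans (le_max_left (m+1) _) hqle; omega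
    have hq0 : (0:ℝ) < q := by exact_mod_cast (by omega : 0 < q)
    have hq4 : 4/(t-s) < q := by
      have h1 : (⌈4/(t-s)⌉₊ + 1 : ℕ) ≤ q := le_trans (le_max_right (m+1) _) hqle
      have h2 : 4/(t-s) ≤ (⌈4/(t-s)⌉₊ : ℝ) := Nat.le_ceil _
      have h3 : ((⌈4/(t-s)⌉₊ + 1 : ℕ) : ℝ) ≤ q := by exact_mod_cast h1
      push_cast at h3
      linarith
    have h4q : 4/(q:ℝ) < t - s := by
      rw [div_lt_iff₀ hts] at hq4
      rw [div_lt_iff₀ hq0]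
      nlinarith
    set p₀ : ℤ := ⌊(q:ℝ)*s⌋ + 1 with hp₀
    set p : ℤ := if (q:ℤ) ∣ p₀ then p₀ + 1 else p₀ with hp
    have hpd : ¬(q:ℤ) ∣ p := by
      by_cases h : (q:ℤ) ∣ p₀
      · rw [hp, if_pos h]
        intro h2
        have h3 : (q:ℤ) ∣ 1 := by
          have := dvd_sub h2 h
          simpa using this
        have h4 : (q:ℤ) ≤ 1 := Int.le_of_dvd one_pos h3
        omega
      · rw [hp, if_neg h]; exact h
    have hp₀lb : (q:ℝ)*s < (p₀:ℝ) := by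
      rw [hp₀]
      push_cast
      exact Int.lt_floor_add_one _
    have hplb : (q:ℝ)*s < (p:ℝ) := by
      rcases le_or_gt (p₀:ℝ) (p:ℝ) with h | h
      · linarith
      · exfalso
        rw [hp] at h
        by_cases h2 : (q:ℤ) ∣ p₀
        · rw [if_pos h2] at h; push_cast at h; linarith
        · rw [if_neg h2] at h; linarith
    have hpub : (p:ℝ) ≤ (q:ℝ)*s + 3 := by
      have h1 : (p:ℤ) ≤ p₀ + 1 := by
        rw [hp]; split <;> omega
      have h2 : ((p₀:ℤ):ℝ) ≤ (q:ℝ)*s + 1 := by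
        rw [hp₀]; push_cast
        linarith [Int.floor_le ((q:ℝ)*s)]
      have h3 : ((p:ℤ):ℝ) ≤ ((p₀:ℤ):ℝ) + 1 := by exact_mod_cast h1
      linarith
    have hM4 := hMf4 q
    have hM0 : (0:ℝ) < (Mf q : ℝ) := by exact_mod_cast (by omega : 0 < Mf q)
    set y := (p:ℝ)/q + 1/(3*(Mf q : ℝ)*(q:ℝ)^2) with hy
    have hsmall : 1/(3*(Mf q : ℝ)*(q:ℝ)^2) ≤ 1/(q:ℝ) := by
      apply div_le_div_of_nonneg_left (by norm_num) hq0
      have hM4R : (4:ℝ) ≤ (Mf q : ℝ) := by exact_mod_cast hM4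
      have hq2R : (2:ℝ) ≤ (q:ℝ) := by exact_mod_cast hq2
      nlinarith [hq0, hM4R, hq2R, mul_pos hq0 hq0]
    refine ⟨y, ?_, ?_, ?_⟩
    · rw [hU]
      refine Set.mem_iUnion.2 ⟨q, Set.mem_iUnion.2 ⟨⟨hqp, hqm⟩,
        Set.mem_iUnion.2 ⟨p, Set.mem_iUnion.2 ⟨hpd, ?_⟩⟩⟩⟩
      constructor
      · rw [hy]
        have : 1/(4*(Mf q : ℝ)*(q:ℝ)^2) < 1/(3*(Mf q : ℝ)*(q:ℝ)^2) := by
          apply div_lt_div_of_pos_left (by norm_num) (by positivity)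
          nlinarith [mul_pos hM0 (mul_pos hq0 hq0)]
        linarith
      · rw [hy]
        have : 1/(3*(Mf q : ℝ)*(q:ℝ)^2) < 1/(2*(Mf q : ℝ)*(q:ℝ)^2) := by
          apply div_lt_div_of_pos_left (by norm_num) (by positivity)
          nlinarith [mul_pos hM0 (mul_pos hq0 hq0)]
        linarith
    · rw [hy]
      have h1 : s < (p:ℝ)/q := by
        rw [lt_div_iff₀ hq0]
        nlinarith
      have h2 : (0:ℝ) < 1/(3*(Mf q : ℝ)*(q:ℝ)^2) := by positivity
      linarith
    · rw [hy]
      have h1 : (p:ℝ)/q ≤ s + 3/q := by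
        rw [div_le_iff₀ hq0]
        have : (s + 3/(q:ℝ))*q = s*q + 3 := by field_simp
        rw [this]
        nlinarith
      have h2 : 3/(q:ℝ) + 1/(q:ℝ) = 4/q := by ring
      linarith [hsmall, h4q]
  set W : ℕ → Set ℝ := fun m => {α : ℝ | Irrational α} ∩ U m with hW
  have hWgδ : ∀ m, IsGδ (W m) := fun m => IsGδ.inter IsGδ.setOfPred_irrational (hUopen m).isGδ
  have hWdense : ∀ m, Dense (W m) := fun m =>
    Dense.inter_of_Gδ IsGδ.setOfPred_irrational (hUopen m).isGδ dense_irrational (hUdense m)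
  have hTgδ : IsGδ (⋂ m, W m) := IsGδ.iInter hWgδ
  have hTdense : Dense (⋂ m, W m) := dense_iInter_of_Gδ hWgδ hWdense
  refine ⟨Set.Ioo 0 1 ∩ ⋂ m, W m, IsGδ.inter isOpen_Ioo.isGδ hTgδ, ?_, ?_, ?_⟩
  · intro α hα
    exact ⟨hα.1, (Set.mem_iInter.1 hα.2 0).1⟩
  · intro z hz
    rw [mem_closure_iff]
    intro o ho hzo
    obtain ⟨y, hy1, hy2⟩ := hTdense.exists_mem_open (ho.inter isOpen_Ioo) ⟨z, hzo, hz⟩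
    exact ⟨y, hy2.1, hy2.2, hy1⟩
  · intro α hα k hk d hd
    refine ⟨1/2, by norm_num, ?_⟩
    have hfreq : ∀ m : ℕ, ∃ N ≥ m, ENNReal.ofReal (1/8) ≤
        lebUnit {x | |trimS (rotMap α) (fun y => y⁻¹) (k N) N x / d N - 1| > (1/2:ℝ)} := by
      intro m
      have hαU : α ∈ U m := (Set.mem_iInter.1 hα.2 m).2
      rw [hU] at hαU
      simp only [Set.mem_iUnion] at hαU
      obtain ⟨q, ⟨hqp, hqm⟩, p, hpd, hmem⟩ := hαU
      have hq2 := hqp.two_le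
      have hq0 : (0:ℝ) < q := by exact_mod_cast (by omega : 0 < q)
      have hM4 := hMf4 q
      have hM0 : (0:ℝ) < (Mf q : ℝ) := by exact_mod_cast (by omega : 0 < Mf q)
      have hNm : m ≤ Mf q * q := le_trans hqm (Nat.le_mul_of_pos_left q (by omega))
      set β := α - (p:ℝ)/q with hβdef
      have hαeq : (p:ℝ)/q + β = α := by rw [hβdef]; ring
      have hβ1 : 1/(4*(Mf q : ℝ)*(q:ℝ)^2) < β := by
        have := hmem.1; rw [hβdef]; linarith
      have hβ2 : β < 1/(2*(Mf q : ℝ)*(q:ℝ)^2) := by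
        have := hmem.2; rw [hβdef]; linarith
      have hβ0 : 0 < β := lt_trans (by positivity) hβ1
      have hMk := hMfk q (k (Mf q * q)) (hk (Mf q * q))
      have hmeasA : ENNReal.ofReal (1/4) ≤
          lebUnit (⋃ i ∈ Finset.range q, Ioo (((i:ℝ)+1/4)/q) (((i:ℝ)+1/2)/q)) := by
        have h := meas_event q (by omega) (1/4) (1/2) (by norm_num) (by norm_num) (by norm_num)
        rw [show (1/2 - 1/4 : ℝ) = 1/4 by norm_num] at h
        exact h
      have hmeasB : ENNReal.ofReal (1/8) ≤
          lebUnit (⋃ i ∈ Finset.range q, Ioo (((i:ℝ)+7/8)/q) (((i:ℝ)+1)/q)) := by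
        have h := meas_event q (by omega) (7/8) 1 (by norm_num) (by norm_num) (by norm_num)
        rw [show (1 - 7/8 : ℝ) = 1/8 by norm_num] at h
        exact h
      refine ⟨Mf q * q, hNm, ?_⟩
      set N := Mf q * q with hN
      by_cases hcase : ∀ y ∈ ⋃ i ∈ Finset.range q, Ioo (((i:ℝ)+7/8)/q) (((i:ℝ)+1)/q),
          y ∈ {x : ℝ | |trimS (rotMap α) (fun y => y⁻¹) (k N) N x / d N - 1| > (1/2:ℝ)}
      · exact le_trans hmeasB (measure_mono hcase)
      · push_neg at hcase
        obtain ⟨xB, hxBE, hxBg⟩ := hcase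
        simp only [Set.mem_setOf_eq, not_lt] at hxBg
        obtain ⟨iB, hiB, hxB⟩ := Set.mem_iUnion₂.1 hxBE
        have htB := coreB q (Mf q) (k N) p hqp hpd hM4 hMk β hβ1 hβ2 xB iB
          (Finset.mem_range.1 hiB) hxB
        rw [hαeq] at htB
        have hAbad : ∀ y ∈ ⋃ i ∈ Finset.range q, Ioo (((i:ℝ)+1/4)/q) (((i:ℝ)+1/2)/q),
            y ∈ {x : ℝ | |trimS (rotMap α) (fun y => y⁻¹) (k N) N x / d N - 1| > (1/2:ℝ)} := by
          intro xA hxAE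
          obtain ⟨iA, hiA, hxA⟩ := Set.mem_iUnion₂.1 hxAE
          have htA := coreA q (Mf q) (k N) p hq2 hM4 β hβ0 hβ2 xA iA
            (Finset.mem_range.1 hiA) hxA
          rw [hαeq] at htA
          simp only [Set.mem_setOf_eq]
          by_contra hgood
          push_neg at hgood
          have hdN := hd N
          obtain ⟨hg1, hg2⟩ := abs_le.1 hgood
          obtain ⟨hb1, hb2⟩ := abs_le.1 hxBg
          have h1 : (1/2:ℝ) ≤ trimS (rotMap α) (fun y => y⁻¹) (k N) N xA / d N := by linarith
          have h2 : trimS (rotMap α) (fun y => y⁻¹) (k N) N xB / d N ≤ 3/2 := by linarith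
          rw [le_div_iff₀ hdN] at h1
          rw [div_le_iff₀ hdN] at h2
          have hNq : (0:ℝ) < (Mf q : ℝ)*q*q := by positivity
          nlinarith [htA, htB, h1, h2, hdN]
        exact le_trans (le_trans (ENNReal.ofReal_le_ofReal (by norm_num)) hmeasA)
          (measure_mono hAbad)
    have hfreq2 : ∃ᶠ N in atTop, ENNReal.ofReal (1/8) ≤
        lebUnit {x | |trimS (rotMap α) (fun y => y⁻¹) (k N) N x / d N - 1| > (1/2:ℝ)} :=
      frequently_atTop.2 hfreq
    refine lt_of_lt_of_le (ENNReal.ofReal_pos.2 (by norm_num : (0:ℝ) < 1/8)) ?_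
    rw [Filter.limsup_eq]
    refine le_sInf ?_
    intro aa haa
    obtain ⟨N, h1, h2⟩ := (hfreq2.and_eventually haa).exists
    exact le_trans h1 h2
end

section
/- Let α ∈ (0,1) be irrational with convergent denominators q_n, R = R_α the rotation of [0,1) by α, and f(x) = 1/x for x ∈ (0,1), f(0) = 0. Then for every x ∈ [0,1) and every n ≥ 1, |S_{q_n}^1(f)(x) − q_n log(q_n)| ≤ 7 q_n. -/
open Filter MeasureTheory Topology Set

set_option maxHeartbeats 1000000

namespace CFAux


variable {α : ℝ}

/-- iterates of the Gauss map -/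
noncomputable def gs (α : ℝ) (k : ℕ) : ℝ := gaussMap^[k] α

lemma gs_zero : gs α 0 = α := rfl

lemma gs_succ (k : ℕ) : gs α (k+1) = gaussMap (gs α k) := by
  simp [gs, Function.iterate_succ_apply']

lemma gs_prop (hirr : Irrational α) (hα : α ∈ Set.Ioo (0:ℝ) 1) (k : ℕ) :
    gs α k ∈ Set.Ioo (0:ℝ) 1 ∧ Irrational (gs α k) := by
  induction k with
  | zero => exact ⟨hα, hirr⟩
  | succ k ih =>
    obtain ⟨⟨h0, h1⟩, hirr'⟩ := ih
    have hinv : Irrational (gs α k)⁻¹ := hirr'.inv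
    have hfr : Irrational (Int.fract (gs α k)⁻¹) := by
      rw [Int.fract]; exact hinv.sub_intCast _
    have h01 : Int.fract (gs α k)⁻¹ ∈ Set.Ioo (0:ℝ) 1 := by
      constructor
      · rcases lt_or_eq_of_le (Int.fract_nonneg (gs α k)⁻¹) with h | h
        · exact h
        · exfalso; rw [← h] at hfr; exact hfr ⟨0, by norm_num⟩
      · exact Int.fract_lt_one _
    rw [gs_succ]
    exact ⟨h01, hfr⟩

lemma cfA_eq (k : ℕ) : cfA α (k+1) = ⌊(gs α k)⁻¹⌋₊ := by
  simp [cfA, gs]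

lemma one_lt_inv_gs (hirr : Irrational α) (hα : α ∈ Set.Ioo (0:ℝ) 1) (k : ℕ) :
    1 < (gs α k)⁻¹ := by
  obtain ⟨⟨h0, h1⟩, _⟩ := gs_prop hirr hα k
  exact (one_lt_inv₀ h0).2 h1

lemma cfA_pos (hirr : Irrational α) (hα : α ∈ Set.Ioo (0:ℝ) 1) (k : ℕ) :
    1 ≤ cfA α (k+1) := by
  rw [cfA_eq]
  exact Nat.le_floor (by exact_mod_cast (one_lt_inv_gs hirr hα k).le)

/-- Gauss identity -/
lemma gauss_id (hirr : Irrational α) (hα : α ∈ Set.Ioo (0:ℝ) 1) (k : ℕ) :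
    gs α k * ((cfA α (k+1) : ℝ) + gs α (k+1)) = 1 := by
  obtain ⟨⟨h0, h1⟩, _⟩ := gs_prop hirr hα k
  have hfl : ((cfA α (k+1) : ℕ) : ℝ) = ⌊(gs α k)⁻¹⌋ := by
    rw [cfA_eq]
    exact_mod_cast Int.natCast_floor_eq_floor (le_of_lt (inv_pos.2 h0))
  rw [gs_succ]
  have : (cfA α (k+1) : ℝ) + gaussMap (gs α k) = (gs α k)⁻¹ := by
    rw [hfl]; unfold gaussMap; rw [Int.fract]; ring
  rw [this, mul_inv_cancel₀ (ne_of_gt h0)]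

/-- `β n = ∏_{k<n} gs α k`. -/
noncomputable def bet (α : ℝ) (n : ℕ) : ℝ := ∏ k ∈ Finset.range n, gs α k

lemma bet_zero : bet α 0 = 1 := by simp [bet]

lemma bet_succ (n : ℕ) : bet α (n+1) = bet α n * gs α n := by
  simp [bet, Finset.prod_range_succ]

lemma bet_pos (hirr : Irrational α) (hα : α ∈ Set.Ioo (0:ℝ) 1) (n : ℕ) :
    0 < bet α n := by
  induction n with
  | zero => simp [bet_zero]
  | succ n ih => rw [bet_succ]; exact mul_pos ih (gs_prop hirr hα n).1.1

lemma bet_succ_lt (hirr : Irrational α) (hα : α ∈ Set.Ioo (0:ℝ) 1) (n : ℕ) :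
    bet α (n+1) < bet α n := by
  rw [bet_succ]
  nth_rewrite 2 [← mul_one (bet α n)]
  exact mul_lt_mul_of_pos_left (gs_prop hirr hα n).1.2 (bet_pos hirr hα n)

/-- `D n = q_n α − p_n = (−1)^{n+1} β_n`. -/
lemma D_eq (hirr : Irrational α) (hα : α ∈ Set.Ioo (0:ℝ) 1) :
    ∀ n, (cfQ α n : ℝ) * α - (cfP α n : ℝ) = (-1)^(n+1) * bet α n := by
  have key : ∀ n, ((cfQ α n : ℝ) * α - (cfP α n : ℝ) = (-1)^(n+1) * bet α n) ∧
      ((cfQ α (n+1) : ℝ) * α - (cfP α (n+1) : ℝ) = (-1)^(n+2) * bet α (n+1)) := by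
    intro n
    induction n with
    | zero =>
      constructor
      · simp [cfQ, cfP, bet_zero]
      · simp [cfQ, cfP, bet_succ, bet_zero, gs_zero]
    | succ n ih =>
      obtain ⟨ih1, ih2⟩ := ih
      refine ⟨ih2, ?_⟩
      have hq : (cfQ α (n+2) : ℝ) = (cfA α (n+1) : ℝ) * (cfQ α (n+1) : ℝ) + (cfQ α n : ℝ) := by
        push_cast [cfQ]; ring
      have hp : ((cfP α (n+2) : ℤ) : ℝ) = (cfA α (n+1) : ℝ) * ((cfP α (n+1) : ℤ) : ℝ) + ((cfP α n : ℤ) : ℝ) := by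
        push_cast [cfP]; ring
      have hrec : (cfQ α (n+2) : ℝ) * α - (cfP α (n+2) : ℝ)
          = (cfA α (n+1) : ℝ) * ((cfQ α (n+1) : ℝ) * α - (cfP α (n+1) : ℝ))
            + ((cfQ α n : ℝ) * α - (cfP α n : ℝ)) := by
        rw [hq, hp]; ring
      rw [hrec, ih1, ih2]
      have hg := gauss_id hirr hα n
      -- target: a*((-1)^(n+2) * bet (n+1)) + (-1)^(n+1) * bet n = (-1)^(n+3) * bet (n+2)
      have hb2 : bet α (n+2) = bet α n * (gs α n * gs α (n+1)) := by
        rw [bet_succ, bet_succ]; ring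
      rw [hb2, bet_succ]
      have expand : gs α n * gs α (n+1) = 1 - (cfA α (n+1):ℝ) * gs α n := by
        have := hg
        nlinarith [hg]
      rw [expand]
      ring_nf
  exact fun n => (key n).1


-- SECTION B
lemma cfQ_pos (hirr : Irrational α) (hα : α ∈ Set.Ioo (0:ℝ) 1) :
    ∀ n, 1 ≤ cfQ α (n+1) := by
  have key : ∀ n, 1 ≤ cfQ α (n+1) ∧ 1 ≤ cfQ α (n+2) := by
    intro n
    induction n with
    | zero =>
      refine ⟨le_refl _, ?_⟩
      show 1 ≤ cfA α 1 * cfQ α 1 + cfQ α 0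
      have h1 : 1 ≤ cfA α 1 := by simpa using cfA_pos hirr hα 0
      simp [cfQ]; omega
    | succ n ih =>
      refine ⟨ih.2, ?_⟩
      show 1 ≤ cfA α (n+2) * cfQ α (n+2) + cfQ α (n+1)
      have := cfA_pos hirr hα (n+1)
      nlinarith [ih.1, ih.2]
  exact fun n => (key n).1

lemma cfQ_mono (hirr : Irrational α) (hα : α ∈ Set.Ioo (0:ℝ) 1) (n : ℕ) :
    cfQ α n ≤ cfQ α (n+1) := by
  match n with
  | 0 => simp [cfQ]
  | 1 =>
    show cfQ α 1 ≤ cfA α 1 * cfQ α 1 + cfQ α 0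
    have h1 : 1 ≤ cfA α 1 := by simpa using cfA_pos hirr hα 0
    simp [cfQ]; omega
  | (n+2) =>
    show cfQ α (n+2) ≤ cfA α (n+2) * cfQ α (n+2) + cfQ α (n+1)
    have := cfA_pos hirr hα (n+1)
    nlinarith [cfQ_pos hirr hα n, cfQ_pos hirr hα (n+1)]

lemma det_eq : ∀ n, (cfQ α n : ℤ) * cfP α (n+1) - (cfQ α (n+1) : ℤ) * cfP α n = (-1)^(n+1) := by
  intro n
  induction n with
  | zero => simp [cfQ, cfP]
  | succ n ih =>
    have hq : (cfQ α (n+2) : ℤ) = (cfA α (n+1) : ℤ) * (cfQ α (n+1) : ℤ) + (cfQ α n : ℤ) := by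
      push_cast [cfQ]; ring
    have hp : cfP α (n+2) = (cfA α (n+1) : ℤ) * cfP α (n+1) + cfP α n := rfl
    have : (cfQ α (n+1) : ℤ) * cfP α (n+2) - (cfQ α (n+2) : ℤ) * cfP α (n+1)
        = -((cfQ α n : ℤ) * cfP α (n+1) - (cfQ α (n+1) : ℤ) * cfP α n) := by
      rw [hq, hp]; ring
    rw [this, ih]; ring

/-- `q_{n+1} β_n + q_n β_{n+1} = 1` -/
lemma key_id (hirr : Irrational α) (hα : α ∈ Set.Ioo (0:ℝ) 1) (n : ℕ) :
    (cfQ α (n+1) : ℝ) * bet α n + (cfQ α n : ℝ) * bet α (n+1) = 1 := by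
  have h1 := D_eq hirr hα n
  have h2 := D_eq hirr hα (n+1)
  have hdet := det_eq (α := α) n
  have hdetR : (cfQ α n : ℝ) * (cfP α (n+1) : ℝ) - (cfQ α (n+1) : ℝ) * (cfP α n : ℝ)
      = (-1)^(n+1) := by exact_mod_cast hdet
  have comb : (cfQ α (n+1) : ℝ) * ((cfQ α n : ℝ) * α - (cfP α n : ℝ))
      - (cfQ α n : ℝ) * ((cfQ α (n+1) : ℝ) * α - (cfP α (n+1) : ℝ))
      = (cfQ α n : ℝ) * (cfP α (n+1) : ℝ) - (cfQ α (n+1) : ℝ) * (cfP α n : ℝ) := by ring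
  rw [h1, h2, hdetR] at comb
  rcases Nat.even_or_odd n with he | ho
  · have e1 : ((-1:ℝ))^(n+1) = -1 := (he.add_one).neg_one_pow
    have e2 : ((-1:ℝ))^(n+1+1) = 1 := by
      have : Even (n+1+1) := by rcases he with ⟨r, hr⟩; exact ⟨r+1, by omega⟩
      exact this.neg_one_pow
    rw [e1, e2] at comb; linarith
  · have e1 : ((-1:ℝ))^(n+1) = 1 := by
      have : Even (n+1) := ho.add_one
      exact this.neg_one_pow
    have e2 : ((-1:ℝ))^(n+1+1) = -1 := by
      have : Odd (n+1+1) := by rcases ho with ⟨r, hr⟩; exact ⟨r+1, by omega⟩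
      exact this.neg_one_pow
    rw [e1, e2] at comb; linarith

lemma bet_le (hirr : Irrational α) (hα : α ∈ Set.Ioo (0:ℝ) 1) (n : ℕ) :
    (cfQ α (n+1) : ℝ) * bet α n ≤ 1 := by
  have := key_id hirr hα n
  nlinarith [bet_pos hirr hα (n+1), Nat.cast_nonneg (α := ℝ) (cfQ α n)]

lemma bet_ge (hirr : Irrational α) (hα : α ∈ Set.Ioo (0:ℝ) 1) (n : ℕ) :
    1 ≤ 2 * (cfQ α (n+1) : ℝ) * bet α n := by
  have hid := key_id hirr hα n
  have hm : (cfQ α n : ℝ) ≤ (cfQ α (n+1) : ℝ) := by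
    exact_mod_cast cfQ_mono hirr hα n
  have hb : bet α (n+1) ≤ bet α n := (bet_succ_lt hirr hα n).le
  nlinarith [bet_pos hirr hα (n+1), bet_pos hirr hα n, Nat.cast_nonneg (α := ℝ) (cfQ α n)]

/-- Best approximation: for `0 < m < q_{n+1}` and any integer `k`, `|mα − k| ≥ β_n`. -/
lemma best_approx (hirr : Irrational α) (hα : α ∈ Set.Ioo (0:ℝ) 1) (n : ℕ)
    (m : ℤ) (hm0 : 0 < m) (hm1 : m < (cfQ α (n+1) : ℤ)) (k : ℤ) :
    bet α n ≤ |(m:ℝ) * α - (k:ℝ)| := by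
  set q0 : ℤ := (cfQ α n : ℤ) with hq0
  set q1 : ℤ := (cfQ α (n+1) : ℤ) with hq1
  set p0 : ℤ := cfP α n with hp0
  set p1 : ℤ := cfP α (n+1) with hp1
  have hdet : q0 * p1 - q1 * p0 = (-1)^(n+1) := det_eq n
  set ε : ℤ := (-1)^n with hε
  have hε2 : ε * ε = 1 := by
    rw [hε, ← pow_add]
    exact (neg_one_pow_eq_one_iff_even (by norm_num)).2 ⟨n, by ring⟩
  set s : ℤ := ε * (p0 * m - q0 * k) with hs
  set t : ℤ := ε * (q1 * k - p1 * m) with ht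
  have hdet' : p0 * q1 - p1 * q0 = ε := by
    have : p0 * q1 - p1 * q0 = -((q0 : ℤ) * p1 - q1 * p0) := by ring
    rw [this, hdet, hε]
    rw [pow_succ]; ring
  have hmst : m = s * q1 + t * q0 := by
    have h : s * q1 + t * q0 = ε * (m * (p0 * q1 - p1 * q0)) := by rw [hs, ht]; ring
    rw [h, hdet', show ε * (m * ε) = m * (ε * ε) from by ring, hε2, mul_one]
  have hkst : k = s * p1 + t * p0 := by
    have h : s * p1 + t * p0 = ε * (k * (p0 * q1 - p1 * q0)) := by rw [hs, ht]; ring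
    rw [h, hdet', show ε * (k * ε) = k * (ε * ε) from by ring, hε2, mul_one]
  have hD0 := D_eq hirr hα n
  have hD1 := D_eq hirr hα (n+1)
  have hval : (m:ℝ) * α - (k:ℝ)
      = (s:ℝ) * ((q1:ℝ) * α - (p1:ℝ)) + (t:ℝ) * ((q0:ℝ) * α - (p0:ℝ)) := by
    have hmR : (m:ℝ) = (s:ℝ) * (q1:ℝ) + (t:ℝ) * (q0:ℝ) := by exact_mod_cast hmst
    have hkR : (k:ℝ) = (s:ℝ) * (p1:ℝ) + (t:ℝ) * (p0:ℝ) := by exact_mod_cast hkst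
    rw [hmR, hkR]; ring
  have hq0R : ((cfQ α n : ℤ) : ℝ) = (cfQ α n : ℝ) := by push_cast; ring
  have hq1R : ((cfQ α (n+1) : ℤ) : ℝ) = (cfQ α (n+1) : ℝ) := by push_cast; ring
  rw [hq0, hq1, hq0R, hq1R, hp0, hp1, hD0, hD1] at hval
  -- hval : mα − k = s * (−1)^{n+2} β_{n+1} + t * (−1)^{n+1} β_n
  have hb0 := bet_pos hirr hα n
  have hb1 := bet_pos hirr hα (n+1)
  have hq1pos : (1:ℤ) ≤ q1 := by rw [hq1]; exact_mod_cast cfQ_pos hirr hα n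
  have hq0nonneg : (0:ℤ) ≤ q0 := by positivity
  -- case t = 0
  by_cases htz : t = 0
  · exfalso
    rw [htz] at hmst
    simp at hmst
    rcases le_or_gt 1 s with hs1 | hs1
    · nlinarith
    · have : s ≤ 0 := by omega
      nlinarith
  · -- t ≠ 0
    by_cases hsz : s = 0
    · rw [hsz] at hval
      simp at hval
      rw [hval]
      rw [abs_mul, abs_mul]
      have h1t : (1:ℝ) ≤ |(t:ℝ)| := by
        have : (1:ℤ) ≤ |t| := Int.one_le_abs htz
        calc (1:ℝ) ≤ (|t| : ℤ) := by exact_mod_cast this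
        _ = |(t:ℝ)| := by push_cast; ring
      have habs : |(-1:ℝ)^(n+1)| = 1 := by
        rw [abs_pow]; simp
      rw [habs, abs_of_pos hb0]
      nlinarith
    · -- s ≠ 0, t ≠ 0 : opposite signs
      have hsign : (s ≥ 1 ∧ t ≤ -1) ∨ (s ≤ -1 ∧ t ≥ 1) := by
        rcases lt_or_gt_of_ne hsz with hs1 | hs1 <;> rcases lt_or_gt_of_ne htz with ht1 | ht1
        · exfalso; nlinarith
        · right; omega
        · left; omega
        · exfalso; nlinarith
      -- mα − k = (−1)^n (s β_{n+1} − t β_n)  (since (−1)^{n+2} = (−1)^n, (−1)^{n+1} = −(−1)^n)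
      have hval2 : (m:ℝ) * α - (k:ℝ) = (-1)^n * ((s:ℝ) * bet α (n+1) - (t:ℝ) * bet α n) := by
        rw [hval]; rw [pow_succ, pow_succ]; ring
      rw [hval2, abs_mul, abs_pow]
      simp only [abs_neg, abs_one, one_pow, one_mul]
      rcases hsign with ⟨hs1, ht1⟩ | ⟨hs1, ht1⟩
      · have hsR : (1:ℝ) ≤ (s:ℝ) := by exact_mod_cast hs1
        have htR : (t:ℝ) ≤ -1 := by exact_mod_cast ht1
        have : bet α n ≤ (s:ℝ) * bet α (n+1) - (t:ℝ) * bet α n := by nlinarith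
        calc bet α n ≤ (s:ℝ) * bet α (n+1) - (t:ℝ) * bet α n := this
        _ ≤ |(s:ℝ) * bet α (n+1) - (t:ℝ) * bet α n| := le_abs_self _
      · have hsR : (s:ℝ) ≤ -1 := by exact_mod_cast hs1
        have htR : (1:ℝ) ≤ (t:ℝ) := by exact_mod_cast ht1
        have : bet α n ≤ -((s:ℝ) * bet α (n+1) - (t:ℝ) * bet α n) := by nlinarith
        calc bet α n ≤ -((s:ℝ) * bet α (n+1) - (t:ℝ) * bet α n) := this
        _ ≤ |(s:ℝ) * bet α (n+1) - (t:ℝ) * bet α n| := neg_le_abs _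


/-- bijectivity of `j ↦ (F + j p) mod N` -/
lemma I_facts (N : ℕ) (hN : 1 ≤ N) (p F : ℤ)
    (hcop : ∀ j : ℤ, (N:ℤ) ∣ j * p → (N:ℤ) ∣ j) :
    (∀ j : ℕ, ((F + j * p) % (N:ℤ)).toNat < N) ∧
    (∀ j1 < N, ∀ j2 < N,
      ((F + j1 * p) % (N:ℤ)).toNat = ((F + j2 * p) % (N:ℤ)).toNat → j1 = j2) ∧
    (∀ i < N, ∃ j < N, ((F + j * p) % (N:ℤ)).toNat = i) := by
  have hNz : (N:ℤ) ≠ 0 := by exact_mod_cast Nat.one_le_iff_ne_zero.1 hN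
  have hNpos : (0:ℤ) < N := by exact_mod_cast hN
  have hlt : ∀ j : ℕ, ((F + j * p) % (N:ℤ)).toNat < N := by
    intro j
    have h1 : (F + j * p) % N < N := Int.emod_lt_of_pos _ hNpos
    have h2 : 0 ≤ (F + j * p) % N := Int.emod_nonneg _ hNz
    omega
  have hinj : ∀ j1 < N, ∀ j2 < N,
      ((F + j1 * p) % (N:ℤ)).toNat = ((F + j2 * p) % (N:ℤ)).toNat → j1 = j2 := by
    intro j1 h1 j2 h2 he
    have h1' : 0 ≤ (F + j1 * p) % N := Int.emod_nonneg _ hNz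
    have h2' : 0 ≤ (F + j2 * p) % N := Int.emod_nonneg _ hNz
    have hee : (F + (j1:ℤ) * p) ≡ (F + (j2:ℤ) * p) [ZMOD N] := by
      unfold Int.ModEq
      rw [← Int.toNat_of_nonneg h1', ← Int.toNat_of_nonneg h2', he]
    have hdvd : (N:ℤ) ∣ (F + (j2:ℤ) * p) - (F + (j1:ℤ) * p) := Int.ModEq.dvd hee
    have hdvd2 : (N:ℤ) ∣ ((j2:ℤ) - j1) * p := by
      have h : (F + (j2:ℤ) * p) - (F + (j1:ℤ) * p) = ((j2:ℤ) - j1) * p := by ring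
      rwa [h] at hdvd
    have hdvd3 : (N:ℤ) ∣ ((j2:ℤ) - j1) := hcop _ hdvd2
    rcases hdvd3 with ⟨c, hc⟩
    have hj1 : (j1:ℤ) < N := by exact_mod_cast h1
    have hj2 : (j2:ℤ) < N := by exact_mod_cast h2
    have hcz : c = 0 := by nlinarith [Int.natCast_nonneg j1, Int.natCast_nonneg j2]
    rw [hcz, mul_zero] at hc
    omega
  refine ⟨hlt, hinj, ?_⟩
  have hsurj := Finset.surj_on_of_inj_on_of_card_le (s := Finset.range N)
    (t := Finset.range N) (f := fun j _ => ((F + j * p) % (N:ℤ)).toNat)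
    (fun j _ => Finset.mem_range.2 (hlt j))
    (fun a₁ a₂ ha₁ ha₂ h => hinj a₁ (Finset.mem_range.1 ha₁) a₂ (Finset.mem_range.1 ha₂) h)
    (le_refl _)
  intro i hi
  obtain ⟨j, hj, hij⟩ := hsurj i (Finset.mem_range.2 hi)
  exact ⟨j, Finset.mem_range.1 hj, hij.symm⟩

/-- filter-card transport along `I` -/
lemma card_transport (N : ℕ) (I : ℕ → ℕ) (hIlt : ∀ j, I j < N)
    (hIinj : ∀ j1 < N, ∀ j2 < N, I j1 = I j2 → j1 = j2)
    (hIsurj : ∀ i < N, ∃ j < N, I j = i) (Q : ℕ → Prop) [DecidablePred Q] :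
    ((Finset.range N).filter (fun j => Q (I j))).card
      = ((Finset.range N).filter Q).card := by
  apply Finset.card_bij (fun j _ => I j)
  · intro j hj
    rw [Finset.mem_filter] at hj ⊢
    exact ⟨Finset.mem_range.2 (hIlt j), hj.2⟩
  · intro j1 h1 j2 h2 h
    rw [Finset.mem_filter] at h1 h2
    exact hIinj j1 (Finset.mem_range.1 h1.1) j2 (Finset.mem_range.1 h2.1) h
  · intro i hi
    rw [Finset.mem_filter] at hi
    obtain ⟨j, hj, hij⟩ := hIsurj i (Finset.mem_range.1 hi.1)
    exact ⟨j, Finset.mem_filter.2 ⟨Finset.mem_range.2 hj, by rw [hij]; exact hi.2⟩, hij⟩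

/-- The discrepancy/counting lemma. -/
lemma counting (N : ℕ) (hN : 1 ≤ N) (p : ℤ) (x D : ℝ) (hD : (N:ℝ) * |D| ≤ 1)
    (α : ℝ) (hαeq : α = ((p:ℝ) + D) / N)
    (hcop : ∀ j : ℤ, (N:ℤ) ∣ j * p → (N:ℤ) ∣ j)
    (t : ℝ) (ht0 : 0 ≤ t) (ht1 : t ≤ 1) :
    (N:ℝ) * t - 3 ≤
      (((Finset.range N).filter (fun j : ℕ => Int.fract (x + (j:ℝ) * α) < t)).card : ℝ) ∧
    (((Finset.range N).filter (fun j : ℕ => Int.fract (x + (j:ℝ) * α) < t)).card : ℝ)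
      ≤ (N:ℝ) * t + 3 := by
  have hNpos : (0:ℝ) < N := by exact_mod_cast hN
  have hNZ : (N:ℝ) ≠ 0 := ne_of_gt hNpos
  set F : ℤ := ⌊(N:ℝ) * x⌋ with hF
  set c : ℝ := Int.fract ((N:ℝ) * x) with hc
  have hc0 : 0 ≤ c := Int.fract_nonneg _
  have hc1 : c < 1 := Int.fract_lt_one _
  obtain ⟨hIlt, hIinj, hIsurj⟩ := I_facts N hN p F hcop
  set I : ℕ → ℕ := fun j => ((F + j * p) % (N:ℤ)).toNat with hI
  have hxx : x = ((F:ℝ) + c) / N := by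
    rw [eq_div_iff hNZ, hc, hF, Int.fract]
    ring
  have hrep : ∀ j : ℕ, Int.fract (x + (j:ℝ) * α)
      = Int.fract ((c + (I j : ℝ)) / N + (j:ℝ) * D / N) := by
    intro j
    have hIj : ((I j : ℕ) : ℝ) = (((F + (j:ℤ) * p) % (N:ℤ) : ℤ) : ℝ) := by
      have h2 : 0 ≤ (F + (j:ℤ) * p) % N :=
        Int.emod_nonneg _ (by exact_mod_cast Nat.one_le_iff_ne_zero.1 hN)
      have h3 : ((I j : ℕ) : ℤ) = (F + (j:ℤ) * p) % N := by
        simp only [hI]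
        exact Int.toNat_of_nonneg h2
      exact_mod_cast congrArg (Int.cast : ℤ → ℝ) h3
    set k : ℤ := (F + (j:ℤ) * p) / N with hk
    have hdecomp : (N:ℤ) * k + (F + (j:ℤ) * p) % N = F + (j:ℤ) * p := Int.mul_ediv_add_emod _ _
    have hdecompR : (N:ℝ) * (k:ℝ) + (((F + (j:ℤ) * p) % (N:ℤ) : ℤ) : ℝ)
        = (F:ℝ) + (j:ℝ) * p := by exact_mod_cast hdecomp
    have hxj : x + (j:ℝ) * α = (c + (I j : ℝ)) / N + (j:ℝ) * D / N + (k:ℝ) := by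
      rw [hαeq, hxx, hIj]
      field_simp
      linear_combination -hdecompR
    rw [hxj, Int.fract_add_intCast]
  have hu0 : ∀ j : ℕ, 0 ≤ (c + (I j : ℝ)) / N :=
    fun j => div_nonneg (by positivity) hNpos.le
  have hNN : (1/(N:ℝ)) * N = 1 := one_div_mul_cancel hNZ
  have hεbound : ∀ j : ℕ, j < N → |(j:ℝ) * D / N| ≤ 1 / N := by
    intro j hj
    rw [abs_div, abs_mul, abs_of_nonneg hNpos.le, div_le_div_iff₀ hNpos hNpos]
    have hjN : |(j:ℝ)| ≤ (N:ℝ) := by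
      rw [abs_of_nonneg (by positivity)]
      exact_mod_cast hj.le
    nlinarith [abs_nonneg D, abs_nonneg (j:ℝ)]
  constructor
  · -- LOWER BOUND
    have himp2 : ∀ j ∈ Finset.range N,
        ((1 - c ≤ ((I j):ℝ)) ∧ (((I j):ℝ) < (N:ℝ) * t - 1 - c)) →
        Int.fract (x + (j:ℝ) * α) < t := by
      intro j hj hRI
      rw [hrep j]
      have hε := hεbound j (Finset.mem_range.1 hj)
      have habs := abs_le.1 hε
      have huL : 1 / (N:ℝ) ≤ (c + (I j : ℝ)) / N := by
        rw [div_le_div_iff₀ hNpos hNpos]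
        have := hRI.1
        nlinarith
      have huU : (c + (I j : ℝ)) / N < t - 1 / N := by
        rw [div_lt_iff₀ hNpos]
        have := hRI.2
        nlinarith [hNN]
      have hv0 : 0 ≤ (c + (I j : ℝ)) / N + (j:ℝ) * D / N := by linarith [habs.1]
      have hv1 : (c + (I j : ℝ)) / N + (j:ℝ) * D / N < t := by linarith [habs.2]
      rw [Int.fract_eq_self.2 ⟨hv0, lt_of_lt_of_le hv1 ht1⟩]
      exact hv1
    have hsub : (Finset.range N).filter
          (fun j => (1 - c ≤ ((I j):ℝ)) ∧ (((I j):ℝ) < (N:ℝ) * t - 1 - c)) ⊆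
        (Finset.range N).filter (fun j : ℕ => Int.fract (x + (j:ℝ) * α) < t) := by
      intro j hj
      rw [Finset.mem_filter] at hj ⊢
      exact ⟨hj.1, himp2 j hj.1 hj.2⟩
    have hcard1 := Finset.card_le_card hsub
    have hcard2 := card_transport N I hIlt hIinj hIsurj
      (fun i => (1 - c ≤ (i:ℝ)) ∧ ((i:ℝ) < (N:ℝ) * t - 1 - c))
    by_cases hsmall : (N:ℝ) * t - 2 < 1
    · have h0 : (0:ℝ) ≤ (((Finset.range N).filter
          (fun j : ℕ => Int.fract (x + (j:ℝ) * α) < t)).card : ℝ) := Nat.cast_nonneg _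
      linarith
    · push_neg at hsmall
      set M : ℕ := ⌊(N:ℝ) * t - 2⌋₊ with hM
      have hMle : (M:ℝ) ≤ (N:ℝ) * t - 2 := Nat.floor_le (by linarith)
      have hMgt : (N:ℝ) * t - 2 < (M:ℝ) + 1 := Nat.lt_floor_add_one _
      have hIccsub : Finset.Icc 1 M ⊆ (Finset.range N).filter
          (fun i => (1 - c ≤ (i:ℝ)) ∧ ((i:ℝ) < (N:ℝ) * t - 1 - c)) := by
        intro i hi
        rw [Finset.mem_Icc] at hi
        have hi1 : (1:ℝ) ≤ (i:ℝ) := by exact_mod_cast hi.1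
        have hiM : (i:ℝ) ≤ (M:ℝ) := by exact_mod_cast hi.2
        rw [Finset.mem_filter, Finset.mem_range]
        refine ⟨?_, by linarith, by linarith⟩
        have hiN : (i:ℝ) < (N:ℝ) := by nlinarith
        exact_mod_cast hiN
      have hcard3 := Finset.card_le_card hIccsub
      have hIcc : (Finset.Icc 1 M).card = M := by
        rw [Nat.card_Icc]; omega
      have hchain : (M:ℝ) ≤ (((Finset.range N).filter
          (fun j : ℕ => Int.fract (x + (j:ℝ) * α) < t)).card : ℝ) := by
        have : M ≤ ((Finset.range N).filter
            (fun j : ℕ => Int.fract (x + (j:ℝ) * α) < t)).card := by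
          omega
        exact_mod_cast this
      linarith
  · -- UPPER BOUND
    have himp : ∀ j ∈ Finset.range N, Int.fract (x + (j:ℝ) * α) < t →
        ((((I j):ℝ) < (N:ℝ) * t + 1 - c) ∨ ((N:ℝ) - 1 - c ≤ ((I j):ℝ))) := by
      intro j hj hlt
      rw [hrep j] at hlt
      have hε := hεbound j (Finset.mem_range.1 hj)
      have habs := abs_le.1 hε
      rcases lt_or_ge ((c + (I j : ℝ)) / N + (j:ℝ) * D / N) 0 with hv0 | hv0
      · left
        have h1 : (c + (I j : ℝ)) / N < 1 / N := by linarith [habs.1]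
        rw [div_lt_div_iff₀ hNpos hNpos] at h1
        have h2 : c + (I j : ℝ) < 1 := lt_of_mul_lt_mul_right (by linarith) hNpos.le
        nlinarith
      · rcases lt_or_ge ((c + (I j : ℝ)) / N + (j:ℝ) * D / N) 1 with hv1 | hv1
        · left
          rw [Int.fract_eq_self.2 ⟨hv0, hv1⟩] at hlt
          have h1 : (c + (I j : ℝ)) / N < t + 1 / N := by linarith [habs.2]
          rw [div_lt_iff₀ hNpos] at h1
          nlinarith [hNN]
        · right
          have h1 : 1 - 1 / N ≤ (c + (I j : ℝ)) / N := by linarith [habs.2]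
          rw [le_div_iff₀ hNpos] at h1
          nlinarith [hNN]
    have hsub : (Finset.range N).filter (fun j : ℕ => Int.fract (x + (j:ℝ) * α) < t) ⊆
        (Finset.range N).filter
          (fun j => (((I j):ℝ) < (N:ℝ) * t + 1 - c) ∨ ((N:ℝ) - 1 - c ≤ ((I j):ℝ))) := by
      intro j hj
      rw [Finset.mem_filter] at hj ⊢
      exact ⟨hj.1, himp j hj.1 hj.2⟩
    have hcard1 := Finset.card_le_card hsub
    have hcard2 := card_transport N I hIlt hIinj hIsurj
      (fun i => ((i:ℝ) < (N:ℝ) * t + 1 - c) ∨ ((N:ℝ) - 1 - c ≤ (i:ℝ)))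
    have hsplit : (Finset.range N).filter
        (fun i : ℕ => ((i:ℝ) < (N:ℝ) * t + 1 - c) ∨ ((N:ℝ) - 1 - c ≤ (i:ℝ))) ⊆
        ((Finset.range N).filter (fun i : ℕ => (i:ℝ) < (N:ℝ) * t + 1 - c)) ∪
        ((Finset.range N).filter (fun i : ℕ => (N:ℝ) - 1 - c ≤ (i:ℝ))) := by
      intro i hi
      rw [Finset.mem_filter] at hi
      rw [Finset.mem_union, Finset.mem_filter, Finset.mem_filter]
      rcases hi.2 with h | h
      · exact Or.inl ⟨hi.1, h⟩
      · exact Or.inr ⟨hi.1, h⟩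
    have hcardA : ((Finset.range N).filter (fun i : ℕ => (i:ℝ) < (N:ℝ) * t + 1 - c)).card
        ≤ ⌈(N:ℝ) * t + 1⌉₊ := by
      have hsubA : (Finset.range N).filter (fun i : ℕ => (i:ℝ) < (N:ℝ) * t + 1 - c)
          ⊆ Finset.range ⌈(N:ℝ) * t + 1⌉₊ := by
        intro i hi
        rw [Finset.mem_filter] at hi
        rw [Finset.mem_range, Nat.lt_ceil]
        linarith [hi.2]
      exact (Finset.card_le_card hsubA).trans (Finset.card_range _).le
    have hcardB : ((Finset.range N).filter (fun i : ℕ => (N:ℝ) - 1 - c ≤ (i:ℝ))).card ≤ 1 := by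
      have hsubB : (Finset.range N).filter (fun i : ℕ => (N:ℝ) - 1 - c ≤ (i:ℝ))
          ⊆ {N - 1} := by
        intro i hi
        rw [Finset.mem_filter, Finset.mem_range] at hi
        rw [Finset.mem_singleton]
        have h2 : (N:ℝ) - 2 < (i:ℝ) := by linarith [hi.2]
        have h3 : N < i + 2 := by exact_mod_cast (by linarith : (N:ℝ) < (i:ℝ) + 2)
        omega
      exact (Finset.card_le_card hsubB).trans (by simp)
    have hceil : (⌈(N:ℝ) * t + 1⌉₊ : ℝ) ≤ (N:ℝ) * t + 2 := by
      have := Nat.ceil_lt_add_one (show (0:ℝ) ≤ (N:ℝ) * t + 1 by positivity)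
      linarith
    have htot : ((Finset.range N).filter
        (fun j : ℕ => Int.fract (x + (j:ℝ) * α) < t)).card ≤ ⌈(N:ℝ) * t + 1⌉₊ + 1 := by
      calc ((Finset.range N).filter (fun j : ℕ => Int.fract (x + (j:ℝ) * α) < t)).card
          ≤ _ := hcard1
        _ = _ := hcard2
        _ ≤ _ := (Finset.card_le_card hsplit).trans
            ((Finset.card_union_le _ _).trans (by omega))
    have : (((Finset.range N).filter
        (fun j : ℕ => Int.fract (x + (j:ℝ) * α) < t)).card : ℝ)
        ≤ (⌈(N:ℝ) * t + 1⌉₊ : ℝ) + 1 := by exact_mod_cast htot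
    linarith


lemma trim_eq {X : Type*} (T : X → X) (f : X → ℝ) (N : ℕ) (hN : 1 ≤ N) (x : X)
    (M : ℝ) (j0 : ℕ) (hj0 : j0 < N) (hj0M : f (T^[j0] x) = M)
    (hmax : ∀ j < N, f (T^[j] x) ≤ M) :
    trimS T f 1 N x = (∑ j ∈ Finset.range N, f (T^[j] x)) - M := by
  set S : ℝ := ∑ j ∈ Finset.range N, f (T^[j] x) with hS
  set val : Finset ℕ → ℝ := fun A => ∑ n ∈ A, f (T^[n] x) with hval
  have hmem : S - M ∈ (val '' {A : Finset ℕ | A ⊆ Finset.range N ∧ A.card = N - 1}) := by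
    refine ⟨(Finset.range N).erase j0, ⟨Finset.erase_subset _ _, ?_⟩, ?_⟩
    · rw [Finset.card_erase_of_mem (Finset.mem_range.2 hj0), Finset.card_range]
    · rw [hval]
      simp only []
      have := Finset.sum_erase_add (Finset.range N) (fun n => f (T^[n] x))
        (Finset.mem_range.2 hj0)
      rw [← hj0M]
      linarith [this]
  have hlb : ∀ b ∈ (val '' {A : Finset ℕ | A ⊆ Finset.range N ∧ A.card = N - 1}),
      S - M ≤ b := by
    rintro b ⟨A, ⟨hsub, hcard⟩, rfl⟩
    have hAlt : ¬ (Finset.range N ⊆ A) := by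
      intro h
      have := Finset.card_le_card h
      rw [Finset.card_range] at this
      omega
    obtain ⟨j, hjmem, hjA⟩ := Finset.not_subset.1 hAlt
    have hjN : j < N := Finset.mem_range.1 hjmem
    have hAsub : A ⊆ (Finset.range N).erase j := by
      intro a ha
      rw [Finset.mem_erase]
      exact ⟨fun h => hjA (h ▸ ha), hsub ha⟩
    have hAeq : A = (Finset.range N).erase j := by
      apply Finset.eq_of_subset_of_card_le hAsub
      rw [Finset.card_erase_of_mem hjmem, Finset.card_range, hcard]
    have hsum := Finset.sum_erase_add (Finset.range N) (fun n => f (T^[n] x)) hjmem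
    have : val A = S - f (T^[j] x) := by
      rw [hAeq, hval]
      simp only []
      linarith [hsum]
    rw [this]
    linarith [hmax j hjN]
  apply le_antisymm
  · exact csInf_le ⟨S - M, hlb⟩ hmem
  · exact le_csInf ⟨S - M, hmem⟩ hlb

lemma log_diff_le {a : ℝ} (ha : 1 ≤ a) : Real.log (a + 1) - Real.log a ≤ 1 / a := by
  have ha0 : 0 < a := by linarith
  rw [← Real.log_div (by linarith) (ne_of_gt ha0)]
  have h := Real.log_le_sub_one_of_pos (show 0 < (a+1)/a by positivity)
  have : (a + 1) / a - 1 = 1 / a := by field_simp; ring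
  linarith [h, this ▸ h]

lemma le_log_diff {a : ℝ} (ha : 1 ≤ a) : 1 / (a + 1) ≤ Real.log (a + 1) - Real.log a := by
  have ha0 : 0 < a := by linarith
  rw [← Real.log_div (by linarith) (ne_of_gt ha0)]
  have h := Real.log_le_sub_one_of_pos (show 0 < a/(a+1) by positivity)
  have h2 : Real.log (a / (a+1)) = - Real.log ((a+1)/a) := by
    rw [← Real.log_inv]
    congr 1
    field_simp
  have h3 : a / (a+1) - 1 = - (1/(a+1)) := by field_simp; ring
  rw [h2, h3] at h
  linarith

lemma harmUp : ∀ M : ℕ, (∑ i ∈ Finset.range M, 1 / ((i:ℝ) + 1)) ≤ 1 + Real.log M := by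
  intro M
  induction M with
  | zero => simp
  | succ M ih =>
    rw [Finset.sum_range_succ]
    rcases Nat.eq_zero_or_pos M with hM | hM
    · subst hM; simp
    · have hM1 : (1:ℝ) ≤ (M:ℝ) := by exact_mod_cast hM
      have := le_log_diff hM1
      have hcast : ((M:ℕ):ℝ) + 1 = ((M+1 : ℕ):ℝ) := by push_cast; ring
      rw [← hcast]
      linarith


theorem main_est (α : ℝ) (hirr : Irrational α) (hα : α ∈ Set.Ioo (0:ℝ) 1)
    (m : ℕ) (x : ℝ) (hx : x ∈ Set.Ico (0:ℝ) 1) :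
    |trimS (rotMap α) (fun y => y⁻¹) 1 (cfQ α (m+1)) x -
        (cfQ α (m+1) : ℝ) * Real.log (cfQ α (m+1))| ≤ 7 * (cfQ α (m+1) : ℝ) := by
  set N := cfQ α (m+1) with hNdef
  have hN1 : 1 ≤ N := cfQ_pos hirr hα m
  have hNR : (1:ℝ) ≤ (N:ℝ) := by exact_mod_cast hN1
  have hNpos : (0:ℝ) < N := by linarith
  -- orbit description
  have horb : ∀ j : ℕ, (rotMap α)^[j] x = Int.fract (x + (j:ℝ) * α) := by
    intro j
    induction j with
    | zero =>
      simp only [Function.iterate_zero, id_eq, Nat.cast_zero, zero_mul, add_zero]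
      exact (Int.fract_eq_self.2 ⟨hx.1, hx.2⟩).symm
    | succ j ih =>
      rw [Function.iterate_succ_apply', ih]
      show Int.fract (Int.fract (x + (j:ℝ) * α) + α) = _
      have h1 : Int.fract (x + (j:ℝ) * α) + α
          = (x + (((j:ℕ)+1 : ℕ):ℝ) * α) - (⌊x + (j:ℝ) * α⌋ : ℤ) := by
        unfold Int.fract; push_cast; ring
      rw [h1, Int.fract_sub_intCast]
  set pts : ℕ → ℝ := fun j => Int.fract (x + (j:ℝ) * α) with hptsdef
  have hpts0 : ∀ j, 0 ≤ pts j := fun j => Int.fract_nonneg _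
  have hpts1 : ∀ j, pts j < 1 := fun j => Int.fract_lt_one _
  set δ : ℝ := bet α m with hδdef
  have hδpos : 0 < δ := bet_pos hirr hα m
  have h2Nδ : 1 ≤ 2 * (N:ℝ) * δ := bet_ge hirr hα m
  -- separation
  have hsepk : ∀ i < N, ∀ j < N, j < i → δ ≤ |pts i - pts j| := by
    intro i hi j hj hji
    have hm0 : (0:ℤ) < (i:ℤ) - j := by
      have : (j:ℤ) < i := by exact_mod_cast hji
      omega
    have hm1 : (i:ℤ) - j < (N:ℤ) := by
      have : (i:ℤ) < N := by exact_mod_cast hi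
      have : (0:ℤ) ≤ j := by positivity
      omega
    have hba := best_approx hirr hα m ((i:ℤ) - j) hm0 hm1
      (⌊x + (i:ℝ)*α⌋ - ⌊x + (j:ℝ)*α⌋)
    have heq : pts i - pts j
        = ((((i:ℤ) - j : ℤ)):ℝ) * α - (((⌊x + (i:ℝ)*α⌋ - ⌊x + (j:ℝ)*α⌋ : ℤ)):ℝ) := by
      show Int.fract (x + (i:ℝ)*α) - Int.fract (x + (j:ℝ)*α) = _
      unfold Int.fract
      push_cast
      ring
    rw [heq]
    exact hba
  have hsep : ∀ i < N, ∀ j < N, i ≠ j → δ ≤ |pts i - pts j| := by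
    intro i hi j hj hne
    rcases lt_or_gt_of_ne hne with h | h
    · rw [abs_sub_comm]; exact hsepk j hj i hi h
    · exact hsepk i hi j hj h
  have hinj : ∀ i < N, ∀ j < N, pts i = pts j → i = j := by
    intro i hi j hj he
    by_contra hne
    have h := hsep i hi j hj hne
    rw [he, sub_self, abs_zero] at h
    linarith
  -- counting setup
  set p : ℤ := cfP α (m+1) with hpdef
  set D : ℝ := (N:ℝ) * α - p with hDdef
  have hDabs : (N:ℝ) * |D| ≤ 1 := by
    have h1 := D_eq hirr hα (m+1)
    have h2 : |D| = bet α (m+1) := by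
      rw [hDdef, hNdef, h1, abs_mul, abs_pow, abs_neg, abs_one, one_pow, one_mul,
        abs_of_pos (bet_pos hirr hα (m+1))]
    rw [h2]
    have h3 := bet_le hirr hα (m+1)
    have h4 : (N:ℝ) ≤ (cfQ α (m+2):ℝ) := by exact_mod_cast cfQ_mono hirr hα (m+1)
    nlinarith [bet_pos hirr hα (m+1)]
  have hαeq : α = ((p:ℝ) + D) / N := by
    rw [hDdef]; field_simp; ring
  have hcop : ∀ j : ℤ, (N:ℤ) ∣ j * p → (N:ℤ) ∣ j := by
    intro j hdvd
    have hdet := det_eq (α := α) m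
    have hε2 : ((-1:ℤ)^(m+1)) * ((-1:ℤ)^(m+1)) = 1 := by
      rw [← pow_add]
      exact (neg_one_pow_eq_one_iff_even (by norm_num)).2 ⟨m+1, by ring⟩
    have hdd : (N:ℤ) ∣ j * ((-1:ℤ)^(m+1)) := by
      have he : j * ((-1:ℤ)^(m+1))
          = (cfQ α m : ℤ) * (j * p) - (N:ℤ) * (cfP α m * j) := by
        rw [hNdef, hpdef]
        linear_combination -j * hdet
      rw [he]
      exact dvd_sub (Dvd.dvd.mul_left hdvd _) (Dvd.intro _ rfl)
    have h2 := hdd.mul_right ((-1:ℤ)^(m+1))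
    rwa [mul_assoc, hε2, mul_one] at h2
  have hcount := counting N hN1 p x D hDabs α hαeq hcop
  -- dispatch N = 1
  rcases eq_or_lt_of_le hN1 with hN1' | hN2
  · have hzero : trimS (rotMap α) (fun y => y⁻¹) 1 N x = 0 := by
      have ht := trim_eq (rotMap α) (fun y => y⁻¹) N hN1 x
        (((rotMap α)^[0] x)⁻¹) 0 (by omega) rfl
        (by
          intro j hj
          have : j = 0 := by omega
          rw [this])
      rw [ht, ← hN1']
      simp
    rw [hzero, ← hN1']
    simp
  · -- N ≥ 2
    have hN2R : (2:ℝ) ≤ (N:ℝ) := by exact_mod_cast hN2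
    -- sorted points
    set s : Finset ℝ := (Finset.range N).image pts with hsdef
    have hinjOn : ∀ a ∈ Finset.range N, ∀ b ∈ Finset.range N, pts a = pts b → a = b := by
      intro a ha b hb
      exact hinj a (Finset.mem_range.1 ha) b (Finset.mem_range.1 hb)
    have hcard : s.card = N := by
      rw [hsdef, Finset.card_image_of_injOn hinjOn, Finset.card_range]
    set Y : ℕ → ℝ := fun k => if h : k < N then s.orderEmbOfFin hcard ⟨k, h⟩ else 0 with hYdef
    have hYval : ∀ k (h : k < N), Y k = s.orderEmbOfFin hcard ⟨k, h⟩ := by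
      intro k h
      rw [hYdef]
      simp [h]
    have hYmem : ∀ k, k < N → Y k ∈ s := by
      intro k h
      rw [hYval k h]
      exact Finset.orderEmbOfFin_mem s hcard _
    have hYmono : ∀ k l, l < N → k < l → Y k < Y l := by
      intro k l hl hkl
      rw [hYval k (hkl.trans hl), hYval l hl]
      exact (s.orderEmbOfFin hcard).strictMono (show (⟨k, hkl.trans hl⟩ : Fin N) < ⟨l, hl⟩ from hkl)
    have hYmonole : ∀ k l, l < N → k ≤ l → Y k ≤ Y l := by
      intro k l hl hkl
      rcases eq_or_lt_of_le hkl with h | h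
      · rw [h]
      · exact (hYmono k l hl h).le
    have hYsurj : ∀ z ∈ s, ∃ k, ∃ h : k < N, Y k = z := by
      intro z hz
      have hr := Finset.range_orderEmbOfFin s hcard
      have hz' : z ∈ Set.range (s.orderEmbOfFin hcard) := by
        rw [hr]
        exact hz
      obtain ⟨i, hi⟩ := hz'
      refine ⟨i.1, i.2, ?_⟩
      rw [hYval i.1 i.2, ← hi]
    have hsepS : ∀ a ∈ s, ∀ b ∈ s, a ≠ b → δ ≤ |a - b| := by
      intro a ha b hb hab
      rw [hsdef, Finset.mem_image] at ha hb
      obtain ⟨i, hi, rfl⟩ := ha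
      obtain ⟨j, hj, rfl⟩ := hb
      exact hsep i (Finset.mem_range.1 hi) j (Finset.mem_range.1 hj)
        (fun h => hab (by rw [h]))
    have hYgap : ∀ k, k + 1 < N → Y k + δ ≤ Y (k+1) := by
      intro k hk
      have hlt := hYmono k (k+1) hk (Nat.lt_succ_self k)
      have := hsepS (Y k) (hYmem k (by omega)) (Y (k+1)) (hYmem (k+1) hk) (ne_of_lt hlt)
      rw [abs_sub_comm, abs_of_pos (by linarith)] at this
      linarith
    have hY0 : 0 ≤ Y 0 := by
      have := hYmem 0 (by omega)
      rw [hsdef, Finset.mem_image] at this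
      obtain ⟨j, _, hj⟩ := this
      rw [← hj]
      exact hpts0 j
    have hYlb : ∀ k, k < N → (k:ℝ) * δ ≤ Y k := by
      intro k
      induction k with
      | zero => intro _; simpa using hY0
      | succ k ih =>
        intro hk
        have h1 := ih (by omega)
        have h2 := hYgap k hk
        push_cast
        nlinarith
    have hYub : ∀ k, k < N → Y k < 1 := by
      intro k hk
      have := hYmem k hk
      rw [hsdef, Finset.mem_image] at this
      obtain ⟨j, _, hj⟩ := this
      rw [← hj]
      exact hpts1 j
    -- counting at Y k
    have hcnt : ∀ k, ∀ h : k < N,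
        (((Finset.range N).filter (fun j : ℕ => Int.fract (x + (j:ℝ) * α) < Y k)).card = k) := by
      intro k hk
      have hstepA : ((Finset.range N).filter
            (fun j : ℕ => Int.fract (x + (j:ℝ) * α) < Y k)).card
          = (s.filter (fun z => z < Y k)).card := by
        apply Finset.card_bij (fun j _ => pts j)
        · intro j hj
          rw [Finset.mem_filter] at hj ⊢
          exact ⟨by rw [hsdef]; exact Finset.mem_image_of_mem pts hj.1, hj.2⟩
        · intro j1 h1 j2 h2 h
          rw [Finset.mem_filter] at h1 h2
          exact hinjOn j1 h1.1 j2 h2.1 h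
        · intro z hz
          rw [Finset.mem_filter] at hz
          have := hz.1
          rw [hsdef, Finset.mem_image] at this
          obtain ⟨j, hj, hje⟩ := this
          exact ⟨j, Finset.mem_filter.2 ⟨hj, by show pts j < Y k; rw [hje]; exact hz.2⟩, hje⟩
      have hstepB : s.filter (fun z => z < Y k) = (Finset.range k).image Y := by
        apply Finset.ext
        intro z
        rw [Finset.mem_filter]
        constructor
        · rintro ⟨hzs, hzlt⟩
          obtain ⟨l, hl, hlY⟩ := hYsurj z hzs
          refine Finset.mem_image.2 ⟨l, Finset.mem_range.2 ?_, hlY⟩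
          by_contra hlk
          push_neg at hlk
          have := hYmonole k l hl hlk
          rw [hlY] at this
          linarith
        · intro hz
          obtain ⟨l, hl, rfl⟩ := Finset.mem_image.1 hz
          have hlk := Finset.mem_range.1 hl
          exact ⟨hYmem l (hlk.trans hk), hYmono l k hk hlk⟩
      have hYinjOn : ∀ a ∈ Finset.range k, ∀ b ∈ Finset.range k, Y a = Y b → a = b := by
        intro a ha b hb hab
        have ha' := (Finset.mem_range.1 ha).trans hk
        have hb' := (Finset.mem_range.1 hb).trans hk
        by_contra hne
        rcases lt_or_gt_of_ne hne with h | h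
        · exact absurd hab (ne_of_lt (hYmono a b hb' h))
        · exact absurd hab.symm (ne_of_lt (hYmono b a ha' h))
      rw [hstepA, hstepB, Finset.card_image_of_injOn hYinjOn, Finset.card_range]
    have hYb : ∀ k, k < N → ((k:ℝ) - 3 ≤ (N:ℝ) * Y k ∧ (N:ℝ) * Y k ≤ (k:ℝ) + 3) := by
      intro k hk
      have hc := hcount (Y k) (by
        rcases Nat.eq_zero_or_pos k with h0 | h0
        · subst h0; exact hY0
        · have := hYlb k hk
          nlinarith [hδpos]) ((hYub k hk).le)
      obtain ⟨hc1, hc2⟩ := hc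
      have hceq : (((Finset.range N).filter
          (fun j : ℕ => Int.fract (x + (j:ℝ) * α) < Y k)).card : ℝ) = (k:ℝ) := by
        exact_mod_cast hcnt k hk
      rw [hceq] at hc1 hc2
      constructor <;> linarith
    -- sums over sorted values
    have hYinjOnN : ∀ a ∈ Finset.range N, ∀ b ∈ Finset.range N, Y a = Y b → a = b := by
      intro a ha b hb hab
      have ha' := Finset.mem_range.1 ha
      have hb' := Finset.mem_range.1 hb
      by_contra hne
      rcases lt_or_gt_of_ne hne with h | h
      · exact absurd hab (ne_of_lt (hYmono a b hb' h))
      · exact absurd hab.symm (ne_of_lt (hYmono b a ha' h))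
    have hs_imageY : s = (Finset.range N).image Y := by
      refine (Finset.eq_of_subset_of_card_le ?_ ?_).symm
      · intro z hz
        rw [Finset.mem_image] at hz
        obtain ⟨k, hk, rfl⟩ := hz
        exact hYmem k (Finset.mem_range.1 hk)
      · rw [hcard, Finset.card_image_of_injOn hYinjOnN, Finset.card_range]
    have hsumY : ∀ g : ℝ → ℝ, (∑ j ∈ Finset.range N, g (pts j))
        = ∑ k ∈ Finset.range N, g (Y k) := by
      intro g
      have h1 : (∑ z ∈ s, g z) = ∑ j ∈ Finset.range N, g (pts j) := by
        rw [hsdef]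
        exact Finset.sum_image hinjOn
      have h2 : (∑ z ∈ s, g z) = ∑ k ∈ Finset.range N, g (Y k) := by
        rw [hs_imageY]
        exact Finset.sum_image hYinjOnN
      rw [← h1, h2]
    set T1 : ℝ := ∑ k ∈ Finset.Ico 1 N, (Y k)⁻¹ with hT1def
    have hsplitS : (∑ k ∈ Finset.range N, (Y k)⁻¹) = (Y 0)⁻¹ + T1 := by
      rw [Finset.range_eq_Ico,
        ← Finset.sum_Ico_consecutive (fun k => (Y k)⁻¹) (by omega : 0 ≤ 1) (by omega : 1 ≤ N)]
      congr 1
      have h01 : Finset.Ico 0 1 = {0} := by decide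
      rw [h01, Finset.sum_singleton]
    have hbirk : (∑ j ∈ Finset.range N, ((rotMap α)^[j] x)⁻¹)
        = ∑ k ∈ Finset.range N, (Y k)⁻¹ := by
      have h1 : (∑ j ∈ Finset.range N, ((rotMap α)^[j] x)⁻¹)
          = ∑ j ∈ Finset.range N, (pts j)⁻¹ := by
        apply Finset.sum_congr rfl
        intro j _
        rw [horb j]
      rw [h1]
      exact hsumY (fun y => y⁻¹)
    obtain ⟨j0, hj0N, hj0⟩ : ∃ j0, j0 < N ∧ pts j0 = Y 0 := by
      have h := hYmem 0 (by omega)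
      rw [hsdef, Finset.mem_image] at h
      obtain ⟨j, hj, hje⟩ := h
      exact ⟨j, Finset.mem_range.1 hj, hje⟩
    obtain ⟨j1, hj1N, hj1⟩ : ∃ j1, j1 < N ∧ pts j1 = Y 1 := by
      have h := hYmem 1 hN2
      rw [hsdef, Finset.mem_image] at h
      obtain ⟨j, hj, hje⟩ := h
      exact ⟨j, Finset.mem_range.1 hj, hje⟩
    have hY1pos : 0 < Y 1 := by
      have := hYlb 1 hN2
      push_cast at this
      linarith
    have hY1inv : (Y 1)⁻¹ ≤ 2 * (N:ℝ) := by
      have h4 : (1:ℝ) / (2*N) ≤ Y 1 := by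
        rw [div_le_iff₀ (by positivity)]
        have := hYlb 1 hN2
        push_cast at this
        nlinarith
      calc (Y 1)⁻¹ ≤ ((1:ℝ)/(2*N))⁻¹ := by
            apply inv_anti₀ (by positivity) h4
        _ = 2*N := by rw [one_div, inv_inv]
    have hptsmax : ∀ j, j < N → ∃ k, k < N ∧ pts j = Y k := by
      intro j hj
      have h : pts j ∈ s := by
        rw [hsdef]
        exact Finset.mem_image_of_mem pts (Finset.mem_range.2 hj)
      obtain ⟨k, hk, hke⟩ := hYsurj (pts j) h
      exact ⟨k, hk, hke.symm⟩
    have htrim : T1 - 2*(N:ℝ) ≤ trimS (rotMap α) (fun y => y⁻¹) 1 N x ∧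
        trimS (rotMap α) (fun y => y⁻¹) 1 N x ≤ T1 := by
      rcases eq_or_lt_of_le hY0 with hY0z | hY0pos
      · -- Y 0 = 0
        have hmax : ∀ j < N, (fun y : ℝ => y⁻¹) ((rotMap α)^[j] x) ≤ (Y 1)⁻¹ := by
          intro j hj
          simp only []
          rw [horb j]
          obtain ⟨k, hk, hke⟩ := hptsmax j hj
          show (pts j)⁻¹ ≤ (Y 1)⁻¹
          rw [hke]
          rcases Nat.eq_zero_or_pos k with h0 | h0
          · subst h0
            rw [← hY0z, inv_zero]
            positivity
          · have : Y 1 ≤ Y k := hYmonole 1 k hk h0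
            exact inv_anti₀ hY1pos this
        have ht := trim_eq (rotMap α) (fun y => y⁻¹) N hN1 x ((Y 1)⁻¹) j1 hj1N
          (by rw [horb j1]; show (pts j1)⁻¹ = _; rw [hj1]) hmax
        rw [ht, hbirk, hsplitS, ← hY0z, inv_zero]
        constructor
        · linarith
        · have : 0 ≤ (Y 1)⁻¹ := by positivity
          linarith
      · -- Y 0 > 0
        have hmax : ∀ j < N, (fun y : ℝ => y⁻¹) ((rotMap α)^[j] x) ≤ (Y 0)⁻¹ := by
          intro j hj
          simp only []
          rw [horb j]
          obtain ⟨k, hk, hke⟩ := hptsmax j hj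
          show (pts j)⁻¹ ≤ (Y 0)⁻¹
          rw [hke]
          exact inv_anti₀ hY0pos (hYmonole 0 k hk (Nat.zero_le k))
        have ht := trim_eq (rotMap α) (fun y => y⁻¹) N hN1 x ((Y 0)⁻¹) j0 hj0N
          (by rw [horb j0]; show (pts j0)⁻¹ = _; rw [hj0]) hmax
        rw [ht, hbirk, hsplitS]
        constructor
        · linarith
        · linarith
    -- upper bound on T1
    have hterm_up : ∀ k ∈ Finset.Ico 1 N,
        (Y k)⁻¹ ≤ (if k ≤ 3 then 2*(N:ℝ)/k else (N:ℝ)/((k:ℝ)-3)) := by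
      intro k hk
      obtain ⟨hk1, hkN⟩ := Finset.mem_Ico.1 hk
      have hk1R : (1:ℝ) ≤ (k:ℝ) := by exact_mod_cast hk1
      have hYkpos : 0 < Y k := by
        have := hYlb k hkN
        nlinarith
      by_cases h3 : k ≤ 3
      · rw [if_pos h3]
        have h4 : (k:ℝ)/(2*N) ≤ Y k := by
          rw [div_le_iff₀ (by positivity)]
          nlinarith [hYlb k hkN]
        calc (Y k)⁻¹ ≤ ((k:ℝ)/(2*N))⁻¹ := inv_anti₀ (by positivity) h4
          _ = 2*N/k := by rw [inv_div]
      · rw [if_neg h3]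
        push_neg at h3
        have hk4R : (4:ℝ) ≤ (k:ℝ) := by exact_mod_cast h3
        have h4 : ((k:ℝ)-3)/N ≤ Y k := by
          rw [div_le_iff₀ hNpos]
          have := (hYb k hkN).1
          linarith [this]
        have h5 : 0 < ((k:ℝ)-3)/N := by
          apply div_pos (by linarith) hNpos
        calc (Y k)⁻¹ ≤ (((k:ℝ)-3)/N)⁻¹ := inv_anti₀ h5 h4
          _ = N/((k:ℝ)-3) := by rw [inv_div]
    have hT1up : T1 ≤ (N:ℝ)*Real.log N + (N:ℝ) + (11/3)*(N:ℝ) := by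
      have hstep := Finset.sum_le_sum hterm_up
      set b : ℕ := min 4 N with hbdef
      have hb1 : 1 ≤ b := by omega
      have hbN : b ≤ N := by omega
      have hsplit2 : (∑ k ∈ Finset.Ico 1 N,
          (if k ≤ 3 then 2*(N:ℝ)/k else (N:ℝ)/((k:ℝ)-3)))
          = (∑ k ∈ Finset.Ico 1 b, (if k ≤ 3 then 2*(N:ℝ)/k else (N:ℝ)/((k:ℝ)-3)))
          + ∑ k ∈ Finset.Ico b N, (if k ≤ 3 then 2*(N:ℝ)/k else (N:ℝ)/((k:ℝ)-3)) := by
        rw [Finset.sum_Ico_consecutive _ hb1 hbN]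
      have hpart1 : (∑ k ∈ Finset.Ico 1 b, (if k ≤ 3 then 2*(N:ℝ)/k else (N:ℝ)/((k:ℝ)-3)))
          ≤ (11/3)*(N:ℝ) := by
        have he : ∀ k ∈ Finset.Ico 1 b, (if k ≤ 3 then 2*(N:ℝ)/k else (N:ℝ)/((k:ℝ)-3))
            = 2*(N:ℝ)/k := by
          intro k hk
          obtain ⟨hk1, hkb⟩ := Finset.mem_Ico.1 hk
          rw [if_pos (by omega)]
        rw [Finset.sum_congr rfl he]
        have hsub : Finset.Ico 1 b ⊆ Finset.Ico 1 4 := by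
          apply Finset.Ico_subset_Ico (le_refl 1) (by omega)
        have hnn : ∀ (k : ℕ), k ∈ Finset.Ico 1 4 → k ∉ Finset.Ico 1 b → 0 ≤ 2*(N:ℝ)/(k:ℝ) := by
          intro k _ _
          positivity
        have hle := Finset.sum_le_sum_of_subset_of_nonneg hsub hnn
        have hval : (∑ k ∈ Finset.Ico (1:ℕ) 4, 2*(N:ℝ)/(k:ℝ)) = (11/3)*(N:ℝ) := by
          have h14 : Finset.Ico 1 4 = {1, 2, 3} := by decide
          rw [h14]
          rw [Finset.sum_insert (by decide), Finset.sum_insert (by decide),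
            Finset.sum_singleton]
          push_cast
          ring
        linarith
      have hpart2 : (∑ k ∈ Finset.Ico b N, (if k ≤ 3 then 2*(N:ℝ)/k else (N:ℝ)/((k:ℝ)-3)))
          ≤ (N:ℝ) * (1 + Real.log N) := by
        rcases lt_or_ge N 4 with h4 | h4
        · have hbb : b = N := by omega
          rw [hbb]
          simp only [Finset.Ico_self, Finset.sum_empty]
          have : 0 ≤ Real.log N := Real.log_nonneg hNR
          nlinarith
        · have hbb : b = 4 := by omega
          rw [hbb]
          have he : ∀ k ∈ Finset.Ico 4 N, (if k ≤ 3 then 2*(N:ℝ)/k else (N:ℝ)/((k:ℝ)-3))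
              = (N:ℝ) * (1/((k:ℝ)-3)) := by
            intro k hk
            obtain ⟨hk4, _⟩ := Finset.mem_Ico.1 hk
            rw [if_neg (by omega)]
            field_simp
          rw [Finset.sum_congr rfl he, ← Finset.mul_sum]
          have hreidx : (∑ k ∈ Finset.Ico 4 N, 1/((k:ℝ)-3))
              = ∑ i ∈ Finset.range (N-4), 1/((i:ℝ)+1) := by
            rw [Finset.sum_Ico_eq_sum_range]
            apply Finset.sum_congr rfl
            intro i _
            congr 1
            push_cast
            ring
          rw [hreidx]
          have hh := harmUp (N-4)
          have hlog : Real.log ((N-4:ℕ):ℝ) ≤ Real.log N := by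
            rcases Nat.eq_zero_or_pos (N-4) with h0 | h0
            · rw [h0]
              simp only [Nat.cast_zero, Real.log_zero]
              exact Real.log_nonneg hNR
            · apply Real.log_le_log (by exact_mod_cast h0)
              exact_mod_cast (by omega : N - 4 ≤ N)
          have : (∑ i ∈ Finset.range (N-4), 1/((i:ℝ)+1)) ≤ 1 + Real.log N := by
            linarith
          nlinarith [hNpos]
      rw [hsplit2] at hstep
      have hfin : (N:ℝ) * (1 + Real.log N) = (N:ℝ) + (N:ℝ)*Real.log N := by ring
      linarith
    -- lower bound on T1
    have hterm_low : ∀ k ∈ Finset.Ico 1 N,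
        (N:ℝ) * (Real.log ((k:ℝ)+4) - Real.log ((k:ℝ)+3)) ≤ (Y k)⁻¹ := by
      intro k hk
      obtain ⟨hk1, hkN⟩ := Finset.mem_Ico.1 hk
      have hk1R : (1:ℝ) ≤ (k:ℝ) := by exact_mod_cast hk1
      have hYkpos : 0 < Y k := by
        have := hYlb k hkN
        nlinarith
      have h1 : Y k ≤ ((k:ℝ)+3)/N := by
        rw [le_div_iff₀ hNpos]
        have := (hYb k hkN).2
        linarith
      have h2 : (((k:ℝ)+3)/N)⁻¹ ≤ (Y k)⁻¹ := inv_anti₀ hYkpos h1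
      have h3 : (((k:ℝ)+3)/N)⁻¹ = (N:ℝ)/((k:ℝ)+3) := by rw [inv_div]
      have h4 := log_diff_le (show (1:ℝ) ≤ (k:ℝ)+3 by linarith)
      have h5 : (k:ℝ)+3+1 = (k:ℝ)+4 := by ring
      rw [h5] at h4
      have h6 : (N:ℝ) * (Real.log ((k:ℝ)+4) - Real.log ((k:ℝ)+3)) ≤ (N:ℝ) * (1/((k:ℝ)+3)) :=
        mul_le_mul_of_nonneg_left h4 (by positivity)
      have h7 : (N:ℝ) * (1/((k:ℝ)+3)) = (N:ℝ)/((k:ℝ)+3) := by ring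
      linarith [h2, h3 ▸ h2]
    have htele : (∑ k ∈ Finset.Ico 1 N, (Real.log ((k:ℝ)+4) - Real.log ((k:ℝ)+3)))
        = Real.log ((N:ℝ)+3) - Real.log 4 := by
      rw [Finset.sum_Ico_eq_sum_range]
      have he : ∀ i ∈ Finset.range (N-1),
          (Real.log (((1+i:ℕ):ℝ)+4) - Real.log (((1+i:ℕ):ℝ)+3))
          = (fun i : ℕ => Real.log ((i:ℝ)+4)) (i+1) - (fun i : ℕ => Real.log ((i:ℝ)+4)) i := by
        intro i _
        simp only []
        congr 2 <;> push_cast <;> ring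
      rw [Finset.sum_congr rfl he, Finset.sum_range_sub (fun i : ℕ => Real.log ((i:ℝ)+4))]
      show Real.log (((N-1:ℕ):ℝ)+4) - Real.log (((0:ℕ):ℝ)+4) = _
      have hc : ((N-1:ℕ):ℝ) + 4 = (N:ℝ) + 3 := by
        have : (1:ℕ) ≤ N := hN1
        push_cast [this]
        ring
      rw [hc]
      norm_num
    have hT1low : (N:ℝ)*Real.log N - 1.4*(N:ℝ) ≤ T1 := by
      have hstep := Finset.sum_le_sum hterm_low
      rw [← Finset.mul_sum, htele] at hstep
      have hlog4 : Real.log 4 < 1.4 := by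
        have h2 : Real.log 4 = 2 * Real.log 2 := by
          rw [show (4:ℝ) = 2^2 by norm_num, Real.log_pow]
          push_cast
          ring
        have := Real.log_two_lt_d9
        rw [h2]
        linarith
      have hlogm : Real.log N ≤ Real.log ((N:ℝ)+3) :=
        Real.log_le_log hNpos (by linarith)
      nlinarith [hNpos]
    -- final
    rw [abs_le]
    obtain ⟨hlo, hhi⟩ := htrim
    constructor
    · nlinarith
    · nlinarith


end CFAux

theorem stmt13 (α : ℝ) (hirr : Irrational α) (hα : α ∈ Set.Ioo (0:ℝ) 1)
    (n : ℕ) (hn : 1 ≤ n) (x : ℝ) (hx : x ∈ Set.Ico (0:ℝ) 1) :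
    |trimS (rotMap α) (fun y => y⁻¹) 1 (cfQ α n) x -
        (cfQ α n : ℝ) * Real.log (cfQ α n)| ≤ 7 * (cfQ α n : ℝ) := by
  obtain ⟨m, rfl⟩ : ∃ m, n = m + 1 := ⟨n - 1, by omega⟩
  exact CFAux.main_est α hirr hα m x hx
end

section
/- Let α ∈ (0,1) be irrational with partial quotients a_j and convergent denominators q_j. If lim_{n→∞} log(q_{n+1})/log(q_n) = 1, then Σ_{j=1}^{n−1} a_j q_j log(a_j) = o(q_n log(q_n)) as n → ∞. -/
open Filter MeasureTheory Topology Set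

section aux
variable {α : ℝ}

lemma gauss_iter (hirr : Irrational α) (hα : α ∈ Set.Ioo (0:ℝ) 1) (k : ℕ) :
    Irrational (gaussMap^[k] α) ∧ gaussMap^[k] α ∈ Set.Ioo (0:ℝ) 1 := by
  induction k with
  | zero => exact ⟨hirr, hα⟩
  | succ k ih =>
    rw [Function.iterate_succ_apply']
    set x := gaussMap^[k] α with hx
    have hfr : Irrational (gaussMap x) := by
      unfold gaussMap; rw [Int.fract]; exact ih.1.inv.sub_intCast _
    exact ⟨hfr, lt_of_le_of_ne (Int.fract_nonneg _) (Ne.symm hfr.ne_zero),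
      Int.fract_lt_one _⟩

lemma cfA_ge_one (hirr : Irrational α) (hα : α ∈ Set.Ioo (0:ℝ) 1) {j : ℕ} (hj : 1 ≤ j) :
    1 ≤ cfA α j := by
  obtain ⟨h0, h1⟩ := (gauss_iter hirr hα (j-1)).2
  have : (1:ℝ) ≤ (gaussMap^[j-1] α)⁻¹ := by
    rw [le_inv_comm₀ one_pos h0]; simpa using h1.le
  exact Nat.le_floor (by exact_mod_cast this)

lemma cfQ_mono (hirr : Irrational α) (hα : α ∈ Set.Ioo (0:ℝ) 1) : Monotone (cfQ α) := by
  apply monotone_nat_of_le_succ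
  intro n
  match n with
  | 0 => simp [cfQ]
  | (m+1) =>
    show cfQ α (m+1) ≤ cfA α (m+1) * cfQ α (m+1) + cfQ α m
    have h := cfA_ge_one hirr hα (j := m+1) (by omega)
    calc cfQ α (m+1) = 1 * cfQ α (m+1) := (one_mul _).symm
      _ ≤ cfA α (m+1) * cfQ α (m+1) + cfQ α m :=
          le_add_right (Nat.mul_le_mul_right _ h)

lemma cfQ_one_le (hirr : Irrational α) (hα : α ∈ Set.Ioo (0:ℝ) 1) {n : ℕ} (hn : 1 ≤ n) :
    1 ≤ cfQ α n := by
  have := cfQ_mono hirr hα hn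
  simpa [cfQ] using this

lemma cfQ_fib (hirr : Irrational α) (hα : α ∈ Set.Ioo (0:ℝ) 1) (n : ℕ) :
    cfQ α (n+1) + cfQ α n ≤ cfQ α (n+2) := by
  show cfQ α (n+1) + cfQ α n ≤ cfA α (n+1) * cfQ α (n+1) + cfQ α n
  have h := cfA_ge_one hirr hα (j := n+1) (by omega)
  have : 1 * cfQ α (n+1) ≤ cfA α (n+1) * cfQ α (n+1) := Nat.mul_le_mul_right _ h
  omega

lemma cfQ_aq (n : ℕ) : cfA α (n+1) * cfQ α (n+1) ≤ cfQ α (n+2) := by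
  show _ ≤ cfA α (n+1) * cfQ α (n+1) + cfQ α n
  omega

lemma cfQ_three (hirr : Irrational α) (hα : α ∈ Set.Ioo (0:ℝ) 1) : 2 ≤ cfQ α 3 := by
  have h2 : 1 ≤ cfQ α 2 := cfQ_one_le hirr hα (by omega)
  have ha : 1 ≤ cfA α 2 := cfA_ge_one hirr hα (by omega)
  have h3 : 1 * 1 ≤ cfA α 2 * cfQ α 2 := Nat.mul_le_mul ha h2
  show 2 ≤ cfA α 2 * cfQ α 2 + cfQ α 1
  have h4 : cfQ α 1 = 1 := rfl
  omega

lemma cfQ_two_le (hirr : Irrational α) (hα : α ∈ Set.Ioo (0:ℝ) 1) {n : ℕ} (hn : 3 ≤ n) :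
    2 ≤ cfQ α n := (cfQ_three hirr hα).trans (cfQ_mono hirr hα hn)

lemma sum_q_succ_le (hirr : Irrational α) (hα : α ∈ Set.Ioo (0:ℝ) 1) (n : ℕ) :
    ∑ j ∈ Finset.Icc 1 n, cfQ α (j+1) ≤ cfQ α (n+1) + cfQ α (n+2) := by
  induction n with
  | zero => simp
  | succ m ih =>
    rw [Finset.sum_Icc_succ_top (by omega)]
    have hf := cfQ_fib hirr hα (m+1)
    have hA : cfQ α (m+1+1) = cfQ α (m+2) := rfl
    omega

lemma sum_q_succ_le' (hirr : Irrational α) (hα : α ∈ Set.Ioo (0:ℝ) 1) (n : ℕ) :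
    ∑ j ∈ Finset.Icc 1 (n-1), cfQ α (j+1) ≤ 3 * cfQ α n := by
  match n with
  | 0 => simp
  | 1 => simp
  | (m+2) =>
    have h1 : (m+2) - 1 = m + 1 := by omega
    rw [h1, Finset.sum_Icc_succ_top (by omega)]
    have h2 := sum_q_succ_le hirr hα m
    have h3 : cfQ α (m+1) ≤ cfQ α (m+2) := cfQ_mono hirr hα (by omega)
    have hA : cfQ α (m+1+1) = cfQ α (m+2) := rfl
    omega

lemma cfQ_tendsto (hirr : Irrational α) (hα : α ∈ Set.Ioo (0:ℝ) 1) :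
    Tendsto (fun n => (cfQ α n : ℝ)) atTop atTop := by
  have hkey : ∀ k, k + 1 ≤ cfQ α (2*k+1) := by
    intro k
    induction k with
    | zero => simp [cfQ]
    | succ m ih =>
      have h1 := cfQ_fib hirr hα (2*m+1)
      have h2 : 1 ≤ cfQ α (2*m+1+1) := cfQ_one_le hirr hα (by omega)
      have h3 : 2*(m+1)+1 = (2*m+1)+2 := by omega
      rw [h3]; omega
  have hnat : Tendsto (cfQ α) atTop atTop := by
    apply tendsto_atTop_atTop.mpr
    intro b
    exact ⟨2*b+1, fun n hn => le_trans (by have := hkey b; omega) (cfQ_mono hirr hα hn)⟩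
  exact tendsto_natCast_atTop_atTop.comp hnat

lemma log_cfA_le (hirr : Irrational α) (hα : α ∈ Set.Ioo (0:ℝ) 1) (hroth : RothType α)
    {δ : ℝ} (hδ : 0 < δ) :
    ∀ᶠ j in atTop, Real.log (cfA α j) ≤ δ * Real.log (cfQ α j) := by
  have h1 : ∀ᶠ j in atTop,
      Real.log (cfQ α (j + 1)) / Real.log (cfQ α j) < 1 + δ :=
    hroth.eventually_lt_const (by linarith)
  filter_upwards [h1, eventually_ge_atTop 3] with j hj hj3
  have hq2 : (2:ℝ) ≤ cfQ α j := by exact_mod_cast cfQ_two_le hirr hα hj3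
  have hlq : 0 < Real.log (cfQ α j) := Real.log_pos (by linarith)
  have ha1 : (1:ℝ) ≤ cfA α j := by exact_mod_cast cfA_ge_one hirr hα (by omega)
  have haq : (cfA α j : ℝ) * cfQ α j ≤ cfQ α (j+1) := by
    obtain ⟨m, rfl⟩ : ∃ m, j = m + 1 := ⟨j - 1, by omega⟩
    exact_mod_cast cfQ_aq m
  have hlog1 : Real.log (cfA α j) + Real.log (cfQ α j) ≤ Real.log (cfQ α (j+1)) := by
    rw [← Real.log_mul (by linarith) (by linarith)]
    exact Real.log_le_log (by nlinarith) haq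
  have hlog2 : Real.log (cfQ α (j+1)) < (1 + δ) * Real.log (cfQ α j) :=
    (div_lt_iff₀ hlq).mp hj
  nlinarith

end aux

theorem stmt16 (α : ℝ) (hirr : Irrational α) (hα : α ∈ Set.Ioo (0:ℝ) 1)
    (hroth : RothType α) :
    Tendsto (fun n : ℕ =>
        (∑ j ∈ Finset.Icc 1 (n - 1), (cfA α j : ℝ) * (cfQ α j : ℝ) * Real.log (cfA α j)) /
          ((cfQ α n : ℝ) * Real.log (cfQ α n)))
      atTop (𝓝 0) := by
  have hterm_nonneg : ∀ j, 1 ≤ j → 0 ≤ (cfA α j : ℝ) * (cfQ α j : ℝ) * Real.log (cfA α j) := by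
    intro j hj
    have ha1 : (1:ℝ) ≤ cfA α j := by exact_mod_cast cfA_ge_one hirr hα hj
    have : 0 ≤ Real.log (cfA α j) := Real.log_nonneg ha1
    positivity
  have hnum_nonneg : ∀ n, 0 ≤
      ∑ j ∈ Finset.Icc 1 (n - 1), (cfA α j : ℝ) * (cfQ α j : ℝ) * Real.log (cfA α j) :=
    fun n => Finset.sum_nonneg fun j hj => hterm_nonneg j (Finset.mem_Icc.mp hj).1
  have hden_nonneg : ∀ n, (0:ℝ) ≤ (cfQ α n : ℝ) * Real.log (cfQ α n) := by
    intro n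
    rcases Nat.eq_zero_or_pos n with rfl | hn
    · simp [cfQ]
    · have h1 : (1:ℝ) ≤ cfQ α n := by exact_mod_cast cfQ_one_le hirr hα hn
      have := Real.log_nonneg h1
      positivity
  have hdtop : Tendsto (fun n => (cfQ α n : ℝ) * Real.log (cfQ α n)) atTop atTop := by
    have hq := cfQ_tendsto hirr hα
    exact hq.atTop_mul_atTop₀ (Real.tendsto_log_atTop.comp hq)
  refine tendsto_order.2 ⟨fun a ha => ?_, fun ε hε => ?_⟩
  · exact Eventually.of_forall fun n =>
      lt_of_lt_of_le ha (div_nonneg (hnum_nonneg n) (hden_nonneg n))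
  · set δ := ε / 6 with hδdef
    have hδ : 0 < δ := by positivity
    obtain ⟨J, hJ⟩ := (eventually_atTop).1
      ((log_cfA_le hirr hα hroth hδ).and (eventually_ge_atTop 3))
    set C := ∑ j ∈ Finset.Ioc 0 J, (cfA α j : ℝ) * (cfQ α j : ℝ) * Real.log (cfA α j) with hC
    have hCnn : 0 ≤ C := Finset.sum_nonneg fun j hj =>
      hterm_nonneg j (by rw [Finset.mem_Ioc] at hj; omega)
    filter_upwards [eventually_ge_atTop (J+1), eventually_ge_atTop 3,
      hdtop.eventually_ge_atTop (2*(C+1)/ε)] with n hnJ hn3 hnden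
    have hq2 : (2:ℝ) ≤ cfQ α n := by exact_mod_cast cfQ_two_le hirr hα hn3
    have hlq : 0 < Real.log (cfQ α n) := Real.log_pos (by linarith)
    have hdpos : (0:ℝ) < (cfQ α n : ℝ) * Real.log (cfQ α n) := by
      have : (0:ℝ) < cfQ α n := by linarith
      exact mul_pos this hlq
    rw [div_lt_iff₀ hdpos]
    have hsplit : ∑ j ∈ Finset.Icc 1 (n-1), (cfA α j : ℝ) * (cfQ α j : ℝ) * Real.log (cfA α j)
        = C + ∑ j ∈ Finset.Ioc J (n-1),
        (cfA α j : ℝ) * (cfQ α j : ℝ) * Real.log (cfA α j) := by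
      have h1 : Finset.Icc 1 (n-1) = Finset.Ioc 0 (n-1) := by
        ext x; simp [Nat.lt_iff_add_one_le]
      rw [h1, ← Finset.sum_Ioc_consecutive _ (Nat.zero_le J) (by omega), hC]
    have hbound : ∀ j ∈ Finset.Ioc J (n-1),
        (cfA α j : ℝ) * (cfQ α j : ℝ) * Real.log (cfA α j)
          ≤ (cfQ α (j+1) : ℝ) * (δ * Real.log (cfQ α n)) := by
      intro j hj
      rw [Finset.mem_Ioc] at hj
      obtain ⟨hja, hj3⟩ := hJ j (le_of_lt hj.1)
      have hj1 : 1 ≤ j := by omega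
      have ha1 : (1:ℝ) ≤ cfA α j := by exact_mod_cast cfA_ge_one hirr hα hj1
      have hlognn : 0 ≤ Real.log (cfA α j) := Real.log_nonneg ha1
      have haq : (cfA α j : ℝ) * cfQ α j ≤ cfQ α (j+1) := by
        obtain ⟨m, rfl⟩ : ∃ m, j = m + 1 := ⟨j - 1, by omega⟩
        exact_mod_cast cfQ_aq m
      have hqj1 : (1:ℝ) ≤ cfQ α j := by
        exact_mod_cast cfQ_one_le hirr hα hj1
      have hlogmono : Real.log (cfQ α j) ≤ Real.log (cfQ α n) := by
        apply Real.log_le_log (by linarith)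
        exact_mod_cast cfQ_mono hirr hα (show j ≤ n by omega)
      calc (cfA α j : ℝ) * (cfQ α j : ℝ) * Real.log (cfA α j)
          ≤ (cfQ α (j+1) : ℝ) * Real.log (cfA α j) :=
            mul_le_mul_of_nonneg_right haq hlognn
        _ ≤ (cfQ α (j+1) : ℝ) * (δ * Real.log (cfQ α n)) := by
            apply mul_le_mul_of_nonneg_left _ (by positivity)
            calc Real.log (cfA α j) ≤ δ * Real.log (cfQ α j) := hja
              _ ≤ δ * Real.log (cfQ α n) :=
                  mul_le_mul_of_nonneg_left hlogmono hδ.le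
    have hsum2 : ∑ j ∈ Finset.Ioc J (n-1),
        (cfA α j : ℝ) * (cfQ α j : ℝ) * Real.log (cfA α j)
        ≤ (3 * cfQ α n : ℝ) * (δ * Real.log (cfQ α n)) := by
      calc ∑ j ∈ Finset.Ioc J (n-1), (cfA α j : ℝ) * (cfQ α j : ℝ) * Real.log (cfA α j)
          ≤ ∑ j ∈ Finset.Ioc J (n-1), (cfQ α (j+1) : ℝ) * (δ * Real.log (cfQ α n)) :=
            Finset.sum_le_sum hbound
        _ = (∑ j ∈ Finset.Ioc J (n-1), (cfQ α (j+1) : ℝ)) * (δ * Real.log (cfQ α n)) := by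
            rw [Finset.sum_mul]
        _ ≤ (3 * cfQ α n : ℝ) * (δ * Real.log (cfQ α n)) := by
            apply mul_le_mul_of_nonneg_right _ (by positivity)
            have hsub : Finset.Ioc J (n-1) ⊆ Finset.Icc 1 (n-1) := by
              intro x hx; rw [Finset.mem_Ioc] at hx; rw [Finset.mem_Icc]; omega
            have h1 : ∑ j ∈ Finset.Ioc J (n-1), cfQ α (j+1)
                ≤ ∑ j ∈ Finset.Icc 1 (n-1), cfQ α (j+1) :=
              Finset.sum_le_sum_of_subset hsub
            have h2 := sum_q_succ_le' hirr hα n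
            calc ∑ j ∈ Finset.Ioc J (n-1), (cfQ α (j+1) : ℝ)
                = ((∑ j ∈ Finset.Ioc J (n-1), cfQ α (j+1) : ℕ) : ℝ) := by push_cast; ring
              _ ≤ ((3 * cfQ α n : ℕ) : ℝ) := by exact_mod_cast le_trans h1 h2
              _ = (3 * cfQ α n : ℝ) := by push_cast; ring
    have hfin : (3 * (cfQ α n :ℝ)) * (δ * Real.log (cfQ α n))
        = (ε/2) * ((cfQ α n : ℝ) * Real.log (cfQ α n)) := by
      rw [hδdef]; ring
    have hden2 : 2*(C+1) ≤ ((cfQ α n : ℝ) * Real.log (cfQ α n)) * ε :=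
      (div_le_iff₀ hε).mp hnden
    rw [hsplit]
    nlinarith [hsum2, hfin, hden2, hdpos]
end
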